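/- arXiv:1502.04411 — 10 statements merged into one kernel-verified Lean document; each statement's English description precedes it below -/
import Mathlib

section
/- Let d ≥ 2. If v, w ∈ A commute (vw = wv) and the F-span of {v, w} is a Kummer space of degree d, then v and w are F-linearly dependent. -/
/-- If `v, w` in a division `F`-algebra `A` commute and the `F`-span of `{v, w}` is a
Kummer space of degree `d ≥ 2` (i.e. `u ^ d ∈ F·1` for all `u` in the span), then
`v` and `w` are `F`-linearly dependent. -/
theorem statement0 {F A : Type*} [Field F] [CharZero F] [DivisionRing A] [Algebra F A]
    {d : ℕ} (hd : 2 ≤ d) (v w : A) (hcomm : v * w = w * v)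
    (hK : ∀ u ∈ Submodule.span F ({v, w} : Set A), u ^ d ∈ Set.range (algebraMap F A)) :
    ¬ LinearIndependent F ![v, w] := by
  haveI : CharZero A := charZero_of_injective_algebraMap (algebraMap F A).injective
  intro hli
  rw [LinearIndependent.pair_iff] at hli
  have hv0 : v ≠ 0 := by
    intro h
    exact one_ne_zero (hli 1 0 (by simp [h])).1
  set n := d + 1 with hn
  set b : Fin n → A := fun k => w ^ (k : ℕ) * v ^ (d - (k : ℕ)) * (d.choose (k : ℕ) : A)
    with hb
  set φ : Fin n → A := fun i => (((i : ℕ) : F) • w + v) ^ d with hφ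
  have hcomm' : ∀ (t : F), Commute (t • w) v := fun t => Commute.smul_left (show Commute w v from hcomm.symm) t
  have hφeq : ∀ i : Fin n, φ i = ∑ k : Fin n, (((i : ℕ) : F) ^ (k : ℕ)) • b k := by
    intro i
    rw [hφ]
    show ((((i : ℕ) : F)) • w + v) ^ d = _
    rw [Commute.add_pow (hcomm' ((i : ℕ) : F)), ← Fin.sum_univ_eq_sum_range]
    refine Finset.sum_congr rfl fun k _ => ?_
    rw [hb]
    simp only [smul_pow, smul_mul_assoc]
  set M : Matrix (Fin n) (Fin n) F := Matrix.vandermonde (fun i : Fin n => ((i : ℕ) : F))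
    with hM
  have hdet : IsUnit M.det := by
    rw [hM, Matrix.det_vandermonde]
    apply isUnit_iff_ne_zero.mpr
    apply Finset.prod_ne_zero_iff.mpr
    intro i _
    apply Finset.prod_ne_zero_iff.mpr
    intro j hj
    rw [Finset.mem_Ioi] at hj
    refine sub_ne_zero.mpr ?_
    exact_mod_cast (Fin.lt_iff_val_lt_val.mp hj).ne'
  have hφmem : ∀ i : Fin n, φ i ∈ Subalgebra.toSubmodule (⊥ : Subalgebra F A) := by
    intro i
    have hmem : (((i : ℕ) : F)) • w + v ∈ Submodule.span F ({v, w} : Set A) := by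
      refine Submodule.add_mem _ (Submodule.smul_mem _ _ (Submodule.subset_span ?_))
        (Submodule.subset_span ?_) <;> simp
    simpa [Algebra.mem_bot] using hK _ hmem
  have hbmem : ∀ k : Fin n, b k ∈ Subalgebra.toSubmodule (⊥ : Subalgebra F A) := by
    intro k
    have key : ∑ i : Fin n, (M⁻¹ k i) • φ i = b k := by
      calc ∑ i : Fin n, (M⁻¹ k i) • φ i
          = ∑ i : Fin n, ∑ j : Fin n, (M⁻¹ k i * M i j) • b j := by
            refine Finset.sum_congr rfl fun i _ => ?_
            rw [hφeq i, Finset.smul_sum]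
            refine Finset.sum_congr rfl fun j _ => ?_
            rw [smul_smul, hM]
            rfl
        _ = ∑ j : Fin n, (∑ i : Fin n, M⁻¹ k i * M i j) • b j := by
            rw [Finset.sum_comm]
            simp [Finset.sum_smul]
        _ = ∑ j : Fin n, ((M⁻¹ * M) k j) • b j := by
            simp [Matrix.mul_apply]
        _ = b k := by
            rw [Matrix.nonsing_inv_mul M hdet]
            simp [Matrix.one_apply]
    rw [← key]
    exact Submodule.sum_mem _ fun i _ => Submodule.smul_mem _ _ (hφmem i)
  -- extract the k = 0 and k = 1 coefficients
  have h0 : v ^ d ∈ Set.range (algebraMap F A) := by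
    have := hbmem ⟨0, by omega⟩
    rw [Subalgebra.mem_toSubmodule, Algebra.mem_bot] at this
    simpa [hb] using this
  have h1 : w * v ^ (d - 1) * (d : A) ∈ Set.range (algebraMap F A) := by
    have := hbmem ⟨1, by omega⟩
    rw [Subalgebra.mem_toSubmodule, Algebra.mem_bot] at this
    simpa [hb, Nat.choose_one_right] using this
  obtain ⟨α, hα⟩ := h0
  obtain ⟨β, hβ⟩ := h1
  have hdF : (d : F) ≠ 0 := Nat.cast_ne_zero.mpr (by omega)
  have hdA : (d : A) ≠ 0 := Nat.cast_ne_zero.mpr (by omega)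
  have hγ : w * v ^ (d - 1) = algebraMap F A (β / d) := by
    have : algebraMap F A (β / d) * (d : A) = algebraMap F A β := by
      rw [← map_natCast (algebraMap F A) d, ← map_mul, div_mul_cancel₀ _ hdF]
    apply mul_right_cancel₀ hdA
    rw [this, hβ]
  set γ := β / (d : F) with hγdef
  have hvd : v * v ^ (d - 1) = algebraMap F A α := by
    rw [← pow_succ']
    have : d - 1 + 1 = d := by omega
    rw [this, hα]
  have hzero : (α • w - γ • v) * v ^ (d - 1) = 0 := by
    rw [sub_mul, smul_mul_assoc, smul_mul_assoc, hγ, hvd]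
    rw [Algebra.smul_def, Algebra.smul_def, ← map_mul, ← map_mul, mul_comm α γ, sub_self]
  have hvpow : v ^ (d - 1) ≠ 0 := pow_ne_zero _ hv0
  have hlin : α • w - γ • v = 0 := by
    rcases mul_eq_zero.mp hzero with h | h
    · exact h
    · exact absurd h hvpow
  have : γ • v + (-α) • w = 0 := by
    rw [neg_smul]
    linear_combination (norm := module) -hlin
  have hα0 : α = 0 := neg_eq_zero.mp (hli γ (-α) this).2
  have : v ^ d = 0 := by rw [← hα, hα0, map_zero]
  exact pow_ne_zero d hv0 this
end

section
/- If v, w ∈ A satisfy vw = −wv and the F-span of {v, w} is a Kummer space, then v²w² ∈ F·1. -/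
/-- If `v, w` anti-commute and the `F`-span of `{v, w}` is a Kummer space
(of degree 4), then `v² w² ∈ F·1`. Here `F` has characteristic 0 and contains
a primitive 4th root of unity `i` (i.e. `i ^ 2 = -1`). -/
theorem statement1 {F A : Type*} [Field F] [CharZero F] [DivisionRing A] [Algebra F A]
    (i : F) (hi : i ^ 2 = -1) (v w : A) (hanti : v * w = -(w * v))
    (hK : ∀ u ∈ Submodule.span F ({v, w} : Set A), u ^ 4 ∈ Set.range (algebraMap F A)) :
    v ^ 2 * w ^ 2 ∈ Set.range (algebraMap F A) := by
  have hv : v ∈ Submodule.span F ({v, w} : Set A) :=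
    Submodule.subset_span (by simp)
  have hw : w ∈ Submodule.span F ({v, w} : Set A) :=
    Submodule.subset_span (by simp)
  obtain ⟨b, hb⟩ := hK v hv
  obtain ⟨c, hc⟩ := hK w hw
  obtain ⟨a, ha⟩ := hK (v + w) (Submodule.add_mem _ hv hw)
  -- v² commutes with w
  have hcomm : v ^ 2 * w = w * v ^ 2 := by
    have : v * (v * w) = v * -(w * v) := by rw [hanti]
    calc v ^ 2 * w = v * (v * w) := by noncomm_ring
      _ = v * -(w * v) := by rw [hanti]
      _ = -(v * w) * v := by noncomm_ring
      _ = -(-(w * v)) * v := by rw [hanti]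
      _ = w * v ^ 2 := by noncomm_ring
  have hsq : (v + w) ^ 2 = v ^ 2 + w ^ 2 := by
    have : (v + w) ^ 2 = v ^ 2 + (v * w + w * v) + w ^ 2 := by noncomm_ring
    rw [this, hanti]; noncomm_ring
  have hcomm2 : w ^ 2 * v ^ 2 = v ^ 2 * w ^ 2 := by
    calc w ^ 2 * v ^ 2 = w * (w * v ^ 2) := by noncomm_ring
      _ = w * (v ^ 2 * w) := by rw [hcomm]
      _ = (w * v ^ 2) * w := by noncomm_ring
      _ = (v ^ 2 * w) * w := by rw [hcomm]
      _ = v ^ 2 * w ^ 2 := by noncomm_ring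
  have hkey : (v + w) ^ 4 = v ^ 4 + w ^ 4 + 2 * (v ^ 2 * w ^ 2) := by
    calc (v + w) ^ 4 = ((v + w) ^ 2) ^ 2 := by noncomm_ring
      _ = (v ^ 2 + w ^ 2) ^ 2 := by rw [hsq]
      _ = v ^ 4 + w ^ 4 + (v ^ 2 * w ^ 2 + w ^ 2 * v ^ 2) := by noncomm_ring
      _ = v ^ 4 + w ^ 4 + 2 * (v ^ 2 * w ^ 2) := by rw [hcomm2]; noncomm_ring
  refine ⟨(a - b - c) / 2, ?_⟩
  have : CharZero A := charZero_of_injective_algebraMap (algebraMap F A).injective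
  have h2 : (2 : A) ≠ 0 := two_ne_zero
  apply mul_left_cancel₀ h2
  have : (2 : A) * algebraMap F A ((a - b - c) / 2) = algebraMap F A (a - b - c) := by
    rw [← map_ofNat (algebraMap F A) 2, ← map_mul]
    congr 1
    field_simp
  rw [this, map_sub, map_sub, ha, hb, hc]
  rw [hkey]
  noncomm_ring
end

section
/- Let v, w ∈ A be F-linearly independent elements such that vw = i^k·wv for some k ∈ {0, 1, 2, 3} and the F-span of {v, w} is a Kummer space. Then exactly one of the following holds: (1) vw = i·wv, or (2) wv = i·vw, or (3) vw = −wv and v²w² ∈ F·1. -/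
private lemma expand4 {R : Type*} [Ring R] (x y : R) (h : Commute x y) :
    (x + y)^4 = x^4 + 4*(x^3*y) + 6*(x^2*y^2) + 4*(x*y^3) + y^4 := by
  rw [h.add_pow]
  simp [Finset.sum_range_succ]
  norm_num [Nat.choose]
  noncomm_ring

-- the commuting case leads to a contradiction
private lemma commCase {F A : Type*} [Field F] [CharZero F] [DivisionRing A] [Algebra F A]
    (i : F) (hi : i ^ 2 = -1) (v w : A)
    (hli : LinearIndependent F ![v, w])
    (hc : v * w = w * v)
    (hK : ∀ u ∈ Submodule.span F ({v, w} : Set A), u ^ 4 ∈ Set.range (algebraMap F A)) :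
    False := by
  have hv0 : v ≠ 0 := by simpa using hli.ne_zero 0
  have hw0 : w ≠ 0 := by simpa using hli.ne_zero 1
  set I : A := algebraMap F A i with hI
  have hIc : ∀ x : A, I * x = x * I := fun x => Algebra.commutes i x
  have hI2 : I * I = -1 := by
    rw [hI, ← map_mul, ← sq, hi, map_neg, map_one]
  have hmemv : v ∈ Submodule.span F ({v, w} : Set A) :=
    Submodule.subset_span (by simp)
  have hmemw : w ∈ Submodule.span F ({v, w} : Set A) :=
    Submodule.subset_span (by simp)
  have hcomm : Commute v w := hc
  have hcommI : Commute v I := (Algebra.commutes i v).symm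
  have hcIw : Commute v (I * w) := hcommI.mul_right hcomm
  -- powers of I * w
  have hIw2 : (I * w) * (I * w) = -(w * w) := by
    rw [show (I * w) * (I * w) = I * (w * I) * w by noncomm_ring, ← hIc w]
    rw [show I * (I * w) * w = (I * I) * (w * w) by noncomm_ring, hI2]
    noncomm_ring
  -- the four fourth powers
  obtain ⟨p, hp⟩ := hK (v + w) (Submodule.add_mem _ hmemv hmemw)
  obtain ⟨q, hq⟩ := hK (v - w) (Submodule.sub_mem _ hmemv hmemw)
  obtain ⟨r, hr⟩ := hK (v + i • w) (Submodule.add_mem _ hmemv (Submodule.smul_mem _ i hmemw))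
  obtain ⟨s, hs⟩ := hK (v - i • w) (Submodule.sub_mem _ hmemv (Submodule.smul_mem _ i hmemw))
  obtain ⟨a, ha⟩ := hK v hmemv
  rw [expand4 v w hcomm] at hp
  have hq' : algebraMap F A q = v^4 - 4*(v^3*w) + 6*(v^2*w^2) - 4*(v*w^3) + w^4 := by
    rw [hq, sub_eq_add_neg, expand4 v (-w) hcomm.neg_right]
    noncomm_ring
  have hIsmul : i • w = I * w := Algebra.smul_def i w
  have key3 : (I*w)^3 = -(I * w^3) := by
    rw [pow_succ, pow_two, hIw2]
    rw [show -(w * w) * (I * w) = -(((w*w) * I) * w) by noncomm_ring, ← hIc (w*w)]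
    noncomm_ring
  have key2 : (I*w)^2 = -(w^2) := by rw [pow_two, hIw2]; noncomm_ring
  have key4 : (I*w)^4 = w^4 := by
    rw [show (4:ℕ) = 2 + 2 from rfl, pow_add, key2]
    rw [show -w^2 * -w^2 = w^2 * w^2 by noncomm_ring, ← pow_add]
  have hr' : algebraMap F A r = v^4 + I*(4*(v^3*w)) - 6*(v^2*w^2) - I*(4*(v*w^3)) + w^4 := by
    rw [hr, hIsmul, expand4 v (I*w) hcIw, key2, key3, key4]
    rw [show v^3*(I*w) = (v^3*I)*w by noncomm_ring, ← hIc (v^3)]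
    rw [show v * -(I * w^3) = -((v*I)*w^3) by noncomm_ring, ← hIc v]
    noncomm_ring
  have hs' : algebraMap F A s = v^4 - I*(4*(v^3*w)) - 6*(v^2*w^2) + I*(4*(v*w^3)) + w^4 := by
    have hcIw' : Commute v (-(I * w)) := hcIw.neg_right
    rw [hs, hIsmul, sub_eq_add_neg, expand4 v (-(I*w)) hcIw']
    rw [show (-(I*w))^2 = (I*w)^2 by noncomm_ring, show (-(I*w))^3 = -((I*w)^3) by noncomm_ring,
      show (-(I*w))^4 = (I*w)^4 by noncomm_ring, key2, key3, key4]
    rw [show v^3*(-(I*w)) = -((v^3*I)*w) by noncomm_ring, ← hIc (v^3)]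
    rw [show v * - -(I * w^3) = (v*I)*w^3 by noncomm_ring, ← hIc v]
    noncomm_ring
  -- combine
  have key : algebraMap F A (p - q - i*(r - s)) = 16 * (v^3*w) := by
    simp only [map_sub, map_mul]
    rw [← hI, hp, hq', hr', hs']
    rw [show (v^4 + I*(4*(v^3*w)) - 6*(v^2*w^2) - I*(4*(v*w^3)) + w^4 -
        (v^4 - I*(4*(v^3*w)) - 6*(v^2*w^2) + I*(4*(v*w^3)) + w^4)) =
        I*(8*(v^3*w)) - I*(8*(v*w^3)) by noncomm_ring]
    rw [show I * (I*(8*(v^3*w)) - I*(8*(v*w^3))) = (I*I)*(8*(v^3*w)) - (I*I)*(8*(v*w^3)) by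
      noncomm_ring, hI2]
    noncomm_ring
  -- multiply by v on the left
  have key2' : algebraMap F A (16 * a) * w = algebraMap F A (p - q - i*(r-s)) * v := by
    have h1 : v * algebraMap F A (p - q - i*(r-s)) = v * (16 * (v^3*w)) := by rw [key]
    rw [Algebra.commutes (p - q - i*(r-s)) v, h1]
    rw [show v * (16 * (v^3*w)) = 16 * (v^4 * w) by noncomm_ring, ← ha]
    rw [map_mul, map_ofNat]
    noncomm_ring
  -- linear independence
  have hpair := LinearIndependent.pair_iff.mp hli (-(p - q - i*(r-s))) (16 * a) ?_
  · have ha0 : a = 0 := by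
      have h := hpair.2
      norm_num at h
      exact h
    rw [ha0, map_zero] at ha
    exact pow_ne_zero 4 hv0 ha.symm
  · rw [Algebra.smul_def, Algebra.smul_def, map_neg, key2']
    noncomm_ring


-- the anticommuting case: v^2 w^2 is scalar
private lemma anticommCase {F A : Type*} [Field F] [CharZero F] [DivisionRing A] [Algebra F A]
    (v w : A) (hc : v * w = -(w * v))
    (hK : ∀ u ∈ Submodule.span F ({v, w} : Set A), u ^ 4 ∈ Set.range (algebraMap F A)) :
    v ^ 2 * w ^ 2 ∈ Set.range (algebraMap F A) := by
  have hmemv : v ∈ Submodule.span F ({v, w} : Set A) := Submodule.subset_span (by simp)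
  have hmemw : w ∈ Submodule.span F ({v, w} : Set A) := Submodule.subset_span (by simp)
  obtain ⟨a, ha⟩ := hK v hmemv
  obtain ⟨b, hb⟩ := hK w hmemw
  obtain ⟨c, hcc⟩ := hK (v + w) (Submodule.add_mem _ hmemv hmemw)
  -- v^2 commutes with w
  have h2 : v^2 * w = w * v^2 := by
    calc v^2 * w = v * (v * w) := by rw [sq, mul_assoc]
    _ = -(v * (w * v)) := by rw [hc, mul_neg]
    _ = -((v * w) * v) := by rw [mul_assoc]
    _ = (w * v) * v := by rw [hc]; noncomm_ring
    _ = w * v^2 := by rw [sq, mul_assoc]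
  have h22 : Commute (v^2) (w^2) := (Commute.pow_right h2 2 : Commute (v^2) (w^2))
  have hsq : (v + w)^2 = v^2 + w^2 := by
    rw [show (v+w)^2 = v^2 + (v*w + w*v) + w^2 by noncomm_ring, hc]
    noncomm_ring
  have h4 : (v + w)^4 = v^4 + 2*(v^2*w^2) + w^4 := by
    rw [show (4:ℕ) = 2+2 from rfl, pow_add, hsq]
    rw [show (v^2+w^2)*(v^2+w^2) = v^2*v^2 + (v^2*w^2 + w^2*v^2) + w^2*w^2 by noncomm_ring,
      ← h22.eq, ← pow_add v, ← pow_add w]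
    noncomm_ring
  have key : algebraMap F A (c - a - b) = 2 * (v^2*w^2) := by
    rw [map_sub, map_sub, hcc, ha, hb, h4]
    noncomm_ring
  have : CharZero A := charZero_of_injective_algebraMap (algebraMap F A).injective
  refine ⟨(c - a - b)/2, ?_⟩
  apply mul_left_cancel₀ (two_ne_zero (α := A))
  rw [← key, show (2:A) = algebraMap F A 2 from (map_ofNat _ 2).symm, ← map_mul]
  congr 1
  field_simp


private lemma smulzero {F A : Type*} [Field F] [DivisionRing A] [Algebra F A]
    {c : F} {x : A} (hc : c ≠ 0) (hx : x ≠ 0) (h : c • x = 0) : False :=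
  hx ((smul_eq_zero.mp h).resolve_left hc)

/-- If `v, w` are `F`-linearly independent, `v w = i^k · w v` for some `k ∈ {0,1,2,3}`,
and the `F`-span of `{v, w}` is a Kummer space (of degree 4), then exactly one of the
following holds: (1) `v w = i · w v`, (2) `w v = i · v w`, or (3) `v w = -w v` and
`v² w² ∈ F·1`. -/
theorem statement2 {F A : Type*} [Field F] [CharZero F] [DivisionRing A] [Algebra F A]
    (i : F) (hi : i ^ 2 = -1) (v w : A)
    (hli : LinearIndependent F ![v, w])
    (k : ℕ) (hk : k ≤ 3) (hrel : v * w = (i ^ k) • (w * v))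
    (hK : ∀ u ∈ Submodule.span F ({v, w} : Set A), u ^ 4 ∈ Set.range (algebraMap F A)) :
    (v * w = i • (w * v) ∧ ¬ (w * v = i • (v * w)) ∧
        ¬ (v * w = -(w * v) ∧ v ^ 2 * w ^ 2 ∈ Set.range (algebraMap F A))) ∨
    (¬ (v * w = i • (w * v)) ∧ (w * v = i • (v * w)) ∧
        ¬ (v * w = -(w * v) ∧ v ^ 2 * w ^ 2 ∈ Set.range (algebraMap F A))) ∨
    (¬ (v * w = i • (w * v)) ∧ ¬ (w * v = i • (v * w)) ∧
        (v * w = -(w * v) ∧ v ^ 2 * w ^ 2 ∈ Set.range (algebraMap F A))) := by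
  have hv0 : v ≠ 0 := by simpa using hli.ne_zero 0
  have hw0 : w ≠ 0 := by simpa using hli.ne_zero 1
  have hwv0 : w * v ≠ 0 := mul_ne_zero hw0 hv0
  have hvw0 : v * w ≠ 0 := mul_ne_zero hv0 hw0
  have hAchar : CharZero A := charZero_of_injective_algebraMap (algebraMap F A).injective
  have hi0 : i ≠ 0 := by intro h; rw [h] at hi; norm_num at hi
  have hione : i ≠ 1 := by intro h; rw [h] at hi; norm_num at hi
  have hinegone : i ≠ -1 := by intro h; rw [h] at hi; norm_num at hi
  have hip1 : i + 1 ≠ 0 := by intro h; exact hinegone (eq_neg_of_add_eq_zero_left h)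
  have h1mi : (1 : F) - i ≠ 0 := by intro h; exact hione (sub_eq_zero.mp h).symm
  have hii : i + i ≠ 0 := by intro h; exact hi0 (add_self_eq_zero.mp h)
  interval_cases k
  · -- k = 0 : commuting, impossible
    rw [pow_zero, one_smul] at hrel
    exact (commCase i hi v w hli hrel hK).elim
  · -- k = 1
    rw [pow_one] at hrel
    left
    refine ⟨hrel, ?_, ?_⟩
    · intro h
      have h2 : v * w = (i * i) • (v * w) := by
        nth_rewrite 1 [hrel]; rw [h, smul_smul]
      rw [← sq, hi, neg_smul, one_smul] at h2
      have hx : v * w + v * w = 0 := add_eq_zero_iff_eq_neg.mpr h2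
      rw [← two_smul F (v * w)] at hx
      exact smulzero (two_ne_zero (α := F)) hvw0 hx
    · rintro ⟨h, -⟩
      have h0 : (i + 1) • (w * v) = 0 := by
        rw [add_smul, one_smul, ← hrel, h, neg_add_cancel]
      exact smulzero hip1 hwv0 h0
  · -- k = 2
    rw [hi, neg_smul, one_smul] at hrel
    right; right
    refine ⟨?_, ?_, hrel, anticommCase v w hrel hK⟩
    · intro h
      have h0 : (i + 1) • (w * v) = 0 := by
        rw [add_smul, one_smul, ← h, hrel, neg_add_cancel]
      exact smulzero hip1 hwv0 h0
    · intro h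
      have h0 : (1 + i) • (w * v) = 0 := by
        rw [add_smul, one_smul]
        nth_rewrite 1 [h]
        rw [hrel, smul_neg, neg_add_cancel]
      have : (1 : F) + i ≠ 0 := by rw [add_comm]; exact hip1
      exact smulzero this hwv0 h0
  · -- k = 3
    have hi3 : i ^ 3 = -i := by rw [pow_succ, hi]; ring
    rw [hi3] at hrel
    right; left
    have hmain : w * v = i • (v * w) := by
      rw [hrel, smul_smul, show i * -i = 1 by rw [mul_neg, ← sq, hi, neg_neg], one_smul]
    refine ⟨?_, hmain, ?_⟩
    · intro h
      have h0 : (i + i) • (w * v) = 0 := by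
        rw [add_smul]
        nth_rewrite 1 [← h]
        rw [hrel, neg_smul, neg_add_cancel]
      exact smulzero hii hwv0 h0
    · rintro ⟨h, -⟩
      have e1 : -(i • (w * v)) = -(w * v) := by rw [← neg_smul, ← hrel, h]
      have e2 : i • (w * v) = w * v := neg_injective e1
      have h0 : (1 - i) • (w * v) = 0 := by rw [sub_smul, one_smul, e2, sub_self]
      exact smulzero h1mi hwv0 h0
end

section
/- There do not exist F-linearly independent elements v, w, z ∈ A such that the F-span of {v, w, z} is a Kummer space, vw = i·wv, zv = −vz, and zw = −wz. -/
lemma aux1 {A : Type*} [Ring A] {x z : A} (h : z * x = -(x * z)) :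
    (x + z) ^ 4 = x ^ 4 + 2 * (x ^ 2 * z ^ 2) + z ^ 4 := by
  have hz2 : z ^ 2 * x = x * z ^ 2 := by
    have e1 : z ^ 2 * x = z * (z * x) := by noncomm_ring
    rw [e1, h]
    have e2 : z * -(x * z) = -(z * x) * z := by noncomm_ring
    rw [e2, h]; noncomm_ring
  have h2 : (x + z) ^ 2 = x ^ 2 + z ^ 2 := by
    have e : (x + z) ^ 2 = x ^ 2 + (z * x + x * z) + z ^ 2 := by noncomm_ring
    rw [e, h]; noncomm_ring
  have hz2x2 : z ^ 2 * x ^ 2 = x ^ 2 * z ^ 2 := by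
    have e1 : z ^ 2 * x ^ 2 = (z ^ 2 * x) * x := by noncomm_ring
    rw [e1, hz2]
    have e2 : x * z ^ 2 * x = x * (z ^ 2 * x) := by noncomm_ring
    rw [e2, hz2]; noncomm_ring
  have e : (x + z) ^ 4 = ((x + z) ^ 2) * ((x + z) ^ 2) := by noncomm_ring
  rw [e, h2]
  have e3 : (x ^ 2 + z ^ 2) * (x ^ 2 + z ^ 2)
      = x ^ 4 + x ^ 2 * z ^ 2 + z ^ 2 * x ^ 2 + z ^ 4 := by noncomm_ring
  rw [e3, hz2x2]; noncomm_ring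

/-- There are no `F`-linearly independent `v, w, z` in a division algebra `A` such that
the span of `{v, w, z}` is a Kummer space (of degree 4), `v w = i · w v`,
`z v = -v z`, and `z w = -w z`. -/
theorem statement3 {F A : Type*} [Field F] [CharZero F] [DivisionRing A] [Algebra F A]
    (i : F) (hi : i ^ 2 = -1) :
    ¬ ∃ v w z : A, LinearIndependent F ![v, w, z] ∧
      (∀ u ∈ Submodule.span F ({v, w, z} : Set A), u ^ 4 ∈ Set.range (algebraMap F A)) ∧
      v * w = i • (w * v) ∧ z * v = -(v * z) ∧ z * w = -(w * z) := by
  rintro ⟨v, w, z, hli, hK, hvw, hzv, hzw⟩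
  haveI : CharZero A := charZero_of_injective_algebraMap (algebraMap F A).injective
  have hv0 : v ≠ 0 := by simpa using hli.ne_zero 0
  have hw0 : w ≠ 0 := by simpa using hli.ne_zero 1
  have hz0 : z ≠ 0 := by simpa using hli.ne_zero 2
  set I : A := algebraMap F A i with hI
  rw [Algebra.smul_def] at hvw
  -- memberships
  have hvm : v ∈ Submodule.span F ({v, w, z} : Set A) :=
    Submodule.subset_span (by simp)
  have hwm : w ∈ Submodule.span F ({v, w, z} : Set A) :=
    Submodule.subset_span (by simp)
  have hzm : z ∈ Submodule.span F ({v, w, z} : Set A) :=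
    Submodule.subset_span (by simp)
  obtain ⟨av, hav⟩ := hK v hvm
  obtain ⟨aw, haw⟩ := hK w hwm
  obtain ⟨az, haz⟩ := hK z hzm
  obtain ⟨avz, havz⟩ := hK (v + z) (add_mem hvm hzm)
  obtain ⟨awz, hawz⟩ := hK (w + z) (add_mem hwm hzm)
  obtain ⟨avw, havw⟩ := hK (v + w) (add_mem hvm hwm)
  obtain ⟨as, has⟩ := hK (v + w + z) (add_mem (add_mem hvm hwm) hzm)
  -- anticommutation of z with v+w
  have hzs : z * (v + w) = -((v + w) * z) := by
    rw [mul_add, add_mul, hzv, hzw]; abel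
  -- squared relations
  have e1 := aux1 hzv
  have e2 := aux1 hzw
  have e3 := aux1 hzs
  -- v^2 z^2 in F
  have key : ∀ (x : A) (ax axz : F), algebraMap F A ax = x ^ 4 →
      algebraMap F A axz = (x + z) ^ 4 → (x + z) ^ 4 = x ^ 4 + 2 * (x ^ 2 * z ^ 2) + z ^ 4 →
      algebraMap F A ((axz - ax - az) / 2) = x ^ 2 * z ^ 2 := by
    intro x ax axz hax haxz he
    have h2 : (algebraMap F A) (2 : F) = (2 : A) := by
      simp [map_ofNat]
    rw [map_div₀, map_sub, map_sub, hax, haxz, haz, he, h2]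
    rw [div_eq_iff (two_ne_zero (α := A))]
    noncomm_ring
  have hv2z2 := key v av avz hav havz e1
  have hw2z2 := key w aw awz haw hawz e2
  have hs2z2 := key (v + w) avw as havw has e3
  -- (v+w)^2 = v^2 + w^2 + (1+I)(w v)
  have hsq : (v + w) ^ 2 = v ^ 2 + w ^ 2 + (1 + I) * (w * v) := by
    have e : (v + w) ^ 2 = v ^ 2 + (v * w + w * v) + w ^ 2 := by noncomm_ring
    rw [e, hvw]; noncomm_ring
  -- so (1+I) * (w * v * z^2) = algebraMap γ
  set γ : F := (as - avw - az) / 2 - (avz - av - az) / 2 - (awz - aw - az) / 2 with hγ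
  have hgam : algebraMap F A γ = (1 + I) * (w * v * z ^ 2) := by
    rw [hγ, map_sub, map_sub, hv2z2, hw2z2, hs2z2, hsq]
    noncomm_ring
  have h1i : (1 : F) + i ≠ 0 := by
    intro h
    have : i = -1 := eq_neg_of_add_eq_zero_right h
    rw [this] at hi
    norm_num at hi
  have hX : algebraMap F A (γ / (1 + i)) = w * v * z ^ 2 := by
    have h1iA : algebraMap F A (1 + i) ≠ 0 := by
      simpa using (map_ne_zero (algebraMap F A)).mpr h1i
    have : algebraMap F A (1 + i) * algebraMap F A (γ / (1 + i))
        = algebraMap F A (1 + i) * (w * v * z ^ 2) := by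
      rw [← map_mul, mul_div_cancel₀ _ h1i, hgam, map_add, map_one]
    exact mul_left_cancel₀ h1iA this
  -- commutation: v * X = X * v
  have hcomm : v * (w * v * z ^ 2) = (w * v * z ^ 2) * v := by
    rw [← hX, ← Algebra.commutes]
  -- z^2 commutes with v
  have hz2v : z ^ 2 * v = v * z ^ 2 := by
    have e1' : z ^ 2 * v = z * (z * v) := by noncomm_ring
    rw [e1', hzv]
    have e2' : z * -(v * z) = -(z * v) * z := by noncomm_ring
    rw [e2', hzv]; noncomm_ring
  set Y : A := w * v * v * z ^ 2 with hY
  have hL : v * (w * v * z ^ 2) = I * Y := by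
    have e : v * (w * v * z ^ 2) = (v * w) * (v * z ^ 2) := by noncomm_ring
    rw [e, hvw, hY]; noncomm_ring
  have hR : (w * v * z ^ 2) * v = Y := by
    have e : (w * v * z ^ 2) * v = w * v * (z ^ 2 * v) := by noncomm_ring
    rw [e, hz2v, hY]; noncomm_ring
  have hY0 : Y ≠ 0 := by
    rw [hY]
    exact mul_ne_zero (mul_ne_zero (mul_ne_zero hw0 hv0) hv0) (pow_ne_zero 2 hz0)
  have hIY : I * Y = 1 * Y := by rw [one_mul, ← hL, hcomm, hR]
  have hI1 : I = 1 := mul_right_cancel₀ hY0 hIY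
  have : i = 1 := by
    exact (algebraMap F A).injective (by rw [← hI, hI1]; simp)
  rw [this] at hi
  norm_num at hi
end

section
/- Let v, w, z be three distinct monomials of A such that the F-span of {v, w, z} is a Kummer space. Then it is impossible that both zv = −vz and zw = −wz; that is, an element of a basis of monomials of a monomial Kummer space anti-commutes with at most one other basis element. -/
/-- A fixed presentation of a tensor product of `n` cyclic algebras of degree 4
over `F`: generators `x k`, `y k` with `(x k)⁴ = αₖ·1`, `(y k)⁴ = βₖ·1`,
`x k · y k = i · (y k · x k)`, generators with different indices commuting, and the
`x k, y k` generating `A` as an `F`-algebra. -/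
structure TensorCyclicPres (F A : Type*) [Field F] [Ring A] [Algebra F A]
    (i : F) (n : ℕ) where
  x : Fin n → A
  y : Fin n → A
  α : Fin n → F
  β : Fin n → F
  α_ne_zero : ∀ k, α k ≠ 0
  β_ne_zero : ∀ k, β k ≠ 0
  x_pow : ∀ k, x k ^ 4 = algebraMap F A (α k)
  y_pow : ∀ k, y k ^ 4 = algebraMap F A (β k)
  xy_rel : ∀ k, x k * y k = i • (y k * x k)
  xx_comm : ∀ k l, k ≠ l → Commute (x k) (x l)
  yy_comm : ∀ k l, k ≠ l → Commute (y k) (y l)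
  xy_comm : ∀ k l, k ≠ l → Commute (x k) (y l)
  generates : Algebra.adjoin F (Set.range x ∪ Set.range y) = ⊤

/-- A monomial with respect to the presentation: an element of the form
`∏ₖ (x k)^{aₖ} (y k)^{bₖ}` with `0 ≤ aₖ, bₖ ≤ 3`. -/
def TensorCyclicPres.IsMonomial {F A : Type*} [Field F] [Ring A] [Algebra F A]
    {i : F} {n : ℕ} (P : TensorCyclicPres F A i n) (v : A) : Prop :=
  ∃ a b : Fin n → Fin 4,
    v = ((List.finRange n).map (fun k => P.x k ^ (a k : ℕ) * P.y k ^ (b k : ℕ))).prod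


section Statement4Aux

variable {F A : Type*} [Field F] [DivisionRing A] [Algebra F A]
variable {i : F} {n : ℕ}

lemma st4_i_ne_zero (hi : i ^ 2 = -1) : i ≠ 0 := by
  intro h; rw [h] at hi; norm_num at hi

lemma st4_i_pow_four (hi : i ^ 2 = -1) : i ^ 4 = 1 := by
  have h : i ^ 4 = (i ^ 2) ^ 2 := by ring
  rw [h, hi]; ring

lemma st4_i_pow_mod (hi : i ^ 2 = -1) (s : ℕ) : i ^ s = i ^ (s % 4) := by
  conv_lhs => rw [← Nat.mod_add_div s 4]
  rw [pow_add, pow_mul, st4_i_pow_four hi, one_pow, mul_one]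

lemma st4_i_pow_eq_one [CharZero F] (hi : i ^ 2 = -1) {d : ℕ} (hd : d < 4)
    (h : i ^ d = 1) : d = 0 := by
  interval_cases d
  · rfl
  · rw [pow_one] at h; rw [h] at hi; norm_num at hi
  · rw [h] at hi; norm_num at hi
  · exfalso
    have h4 := st4_i_pow_four hi
    have : i ^ 4 = i := by rw [pow_succ, h, one_mul]
    rw [h4] at this
    rw [← this] at hi; norm_num at hi

lemma st4_i_pow_eq_iff [CharZero F] (hi : i ^ 2 = -1) (s t : ℕ) :
    i ^ s = i ^ t ↔ (s : ZMod 4) = (t : ZMod 4) := by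
  rw [ZMod.natCast_eq_natCast_iff]
  unfold Nat.ModEq
  constructor
  · intro h
    rw [st4_i_pow_mod hi s, st4_i_pow_mod hi t] at h
    have hs : s % 4 < 4 := Nat.mod_lt _ (by norm_num)
    have ht : t % 4 < 4 := Nat.mod_lt _ (by norm_num)
    have hi0 : i ≠ 0 := st4_i_ne_zero hi
    rcases le_total (s % 4) (t % 4) with hle | hle
    · obtain ⟨d, hd⟩ := Nat.le.dest hle
      have h1 : i ^ (s % 4) * i ^ d = i ^ (s % 4) * 1 := by
        rw [mul_one, ← pow_add, hd, h]
      have hd0 : d = 0 := st4_i_pow_eq_one hi (by omega)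
        (mul_left_cancel₀ (pow_ne_zero _ hi0) h1)
      omega
    · obtain ⟨d, hd⟩ := Nat.le.dest hle
      have h1 : i ^ (t % 4) * i ^ d = i ^ (t % 4) * 1 := by
        rw [mul_one, ← pow_add, hd, ← h]
      have hd0 : d = 0 := st4_i_pow_eq_one hi (by omega)
        (mul_left_cancel₀ (pow_ne_zero _ hi0) h1)
      omega
  · intro h
    rw [st4_i_pow_mod hi s, st4_i_pow_mod hi t, h]

lemma st4_smul_cancel {c d : F} {N : A} (hN : N ≠ 0) (h : c • N = d • N) : c = d := by
  have h0 : (c - d) • N = 0 := by rw [sub_smul, h, sub_self]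
  rw [Algebra.smul_def] at h0
  rcases mul_eq_zero.mp h0 with h' | h'
  · have : c - d = 0 := (algebraMap F A).injective (by rw [h', map_zero])
    exact sub_eq_zero.mp this
  · exact absurd h' hN

end Statement4Aux

section Part2

variable {F A : Type*} [Field F] [DivisionRing A] [Algebra F A]
variable {i : F} {n : ℕ}

/-- general monomial over a list of indices -/
def Ml (P : TensorCyclicPres F A i n) (a b : Fin n → ℕ) (l : List (Fin n)) : A :=
  (l.map (fun k => P.x k ^ a k * P.y k ^ b k)).prod

/-- the monomial over all indices -/
def MM (P : TensorCyclicPres F A i n) (a b : Fin n → ℕ) : A :=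
  Ml P a b (List.finRange n)

lemma st4_x_ne_zero (P : TensorCyclicPres F A i n) (k : Fin n) : P.x k ≠ 0 := by
  intro h
  apply P.α_ne_zero k
  have h4 : algebraMap F A (P.α k) = algebraMap F A 0 := by
    rw [map_zero, ← P.x_pow k, h, zero_pow]; norm_num
  exact (algebraMap F A).injective h4

lemma st4_y_ne_zero (P : TensorCyclicPres F A i n) (k : Fin n) : P.y k ≠ 0 := by
  intro h
  apply P.β_ne_zero k
  have h4 : algebraMap F A (P.β k) = algebraMap F A 0 := by
    rw [map_zero, ← P.y_pow k, h, zero_pow]; norm_num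
  exact (algebraMap F A).injective h4

lemma Ml_ne_zero (P : TensorCyclicPres F A i n) (a b : Fin n → ℕ) (l : List (Fin n)) :
    Ml P a b l ≠ 0 := by
  refine List.prod_ne_zero ?_
  simp only [List.mem_map]
  rintro ⟨k, -, hk⟩
  exact (mul_ne_zero (pow_ne_zero _ (st4_x_ne_zero P k))
    (pow_ne_zero _ (st4_y_ne_zero P k))) hk

lemma MM_ne_zero (P : TensorCyclicPres F A i n) (a b : Fin n → ℕ) : MM P a b ≠ 0 :=
  Ml_ne_zero P a b _

lemma st4_yx (hi : i ^ 2 = -1) (P : TensorCyclicPres F A i n) (k : Fin n) :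
    P.y k * P.x k = i ^ 3 • (P.x k * P.y k) := by
  have h := P.xy_rel k
  calc P.y k * P.x k = (1 : F) • (P.y k * P.x k) := (one_smul _ _).symm
    _ = (i ^ 4) • (P.y k * P.x k) := by rw [st4_i_pow_four hi]
    _ = i ^ 3 • (i • (P.y k * P.x k)) := by rw [smul_smul, ← pow_succ]
    _ = i ^ 3 • (P.x k * P.y k) := by rw [← h]

lemma st4_y_pow_x (hi : i ^ 2 = -1) (P : TensorCyclicPres F A i n) (k : Fin n) (a : ℕ) :
    P.y k * P.x k ^ a = i ^ (3 * a) • (P.x k ^ a * P.y k) := by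
  induction a with
  | zero => simp
  | succ a ih =>
    calc P.y k * P.x k ^ (a + 1) = (P.y k * P.x k ^ a) * P.x k := by
          rw [pow_succ, mul_assoc]
      _ = i ^ (3 * a) • (P.x k ^ a * (P.y k * P.x k)) := by
          rw [ih, smul_mul_assoc, mul_assoc]
      _ = i ^ (3 * a) • (P.x k ^ a * (i ^ 3 • (P.x k * P.y k))) := by
          rw [st4_yx hi]
      _ = (i ^ (3 * a) * i ^ 3) • (P.x k ^ a * (P.x k * P.y k)) := by
          rw [mul_smul_comm, smul_smul]
      _ = i ^ (3 * (a + 1)) • (P.x k ^ (a + 1) * P.y k) := by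
          rw [← pow_add, ← mul_assoc, ← pow_succ]
          ring_nf

lemma st4_ypow_xpow (hi : i ^ 2 = -1) (P : TensorCyclicPres F A i n) (k : Fin n) (a b : ℕ) :
    P.y k ^ b * P.x k ^ a = i ^ (3 * (a * b)) • (P.x k ^ a * P.y k ^ b) := by
  induction b with
  | zero => simp
  | succ b ih =>
    calc P.y k ^ (b + 1) * P.x k ^ a = P.y k ^ b * (P.y k * P.x k ^ a) := by
          rw [pow_succ, mul_assoc]
      _ = i ^ (3 * a) • (P.y k ^ b * (P.x k ^ a * P.y k)) := by
          rw [st4_y_pow_x hi, mul_smul_comm]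
      _ = i ^ (3 * a) • ((P.y k ^ b * P.x k ^ a) * P.y k) := by rw [mul_assoc]
      _ = i ^ (3 * a) • ((i ^ (3 * (a * b)) • (P.x k ^ a * P.y k ^ b)) * P.y k) := by
          rw [ih]
      _ = (i ^ (3 * a) * i ^ (3 * (a * b))) • (P.x k ^ a * (P.y k ^ b * P.y k)) := by
          rw [smul_mul_assoc, smul_smul, mul_assoc]
      _ = i ^ (3 * (a * (b + 1))) • (P.x k ^ a * P.y k ^ (b + 1)) := by
          rw [← pow_add, ← pow_succ]
          congr 2
          ring

lemma st4_fac_mul (hi : i ^ 2 = -1) (P : TensorCyclicPres F A i n) (k : Fin n)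
    (a b a' b' : ℕ) :
    (P.x k ^ a * P.y k ^ b) * (P.x k ^ a' * P.y k ^ b') =
      i ^ (3 * (a' * b)) • (P.x k ^ (a + a') * P.y k ^ (b + b')) := by
  calc (P.x k ^ a * P.y k ^ b) * (P.x k ^ a' * P.y k ^ b')
      = P.x k ^ a * ((P.y k ^ b * P.x k ^ a') * P.y k ^ b') := by
        rw [mul_assoc, mul_assoc]
    _ = P.x k ^ a * ((i ^ (3 * (a' * b)) • (P.x k ^ a' * P.y k ^ b)) * P.y k ^ b') := by
        rw [st4_ypow_xpow hi]
    _ = i ^ (3 * (a' * b)) • (P.x k ^ a * ((P.x k ^ a' * P.y k ^ b) * P.y k ^ b')) := by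
        rw [smul_mul_assoc, mul_smul_comm]
    _ = i ^ (3 * (a' * b)) • (P.x k ^ (a + a') * P.y k ^ (b + b')) := by
        simp only [pow_add, mul_assoc]

lemma st4_fac_comm (P : TensorCyclicPres F A i n) {k l : Fin n} (h : k ≠ l)
    (a b a' b' : ℕ) :
    Commute (P.x k ^ a * P.y k ^ b) (P.x l ^ a' * P.y l ^ b') := by
  have h1 : Commute (P.x k ^ a) (P.x l ^ a' * P.y l ^ b') :=
    ((P.xx_comm k l h).pow_pow _ _).mul_right ((P.xy_comm k l h).pow_pow _ _)
  have h2 : Commute (P.y k ^ b) (P.x l ^ a' * P.y l ^ b') :=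
    (((P.xy_comm l k h.symm).symm).pow_pow _ _).mul_right
      ((P.yy_comm k l h).pow_pow _ _)
  exact h1.mul_left h2

lemma st4_fac_comm_Ml (P : TensorCyclicPres F A i n) {k : Fin n} {l : List (Fin n)}
    (h : k ∉ l) (a b a' b' : Fin n → ℕ) :
    Commute (P.x k ^ a k * P.y k ^ b k) (Ml P a' b' l) := by
  refine Commute.list_prod_right _ _ ?_
  simp only [List.mem_map]
  rintro u ⟨j, hj, rfl⟩
  exact st4_fac_comm P (by rintro rfl; exact h hj) _ _ _ _

lemma Ml_cons (P : TensorCyclicPres F A i n) (a b : Fin n → ℕ) (k : Fin n)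
    (l : List (Fin n)) :
    Ml P a b (k :: l) = (P.x k ^ a k * P.y k ^ b k) * Ml P a b l := by
  simp [Ml]

lemma Ml_mul (hi : i ^ 2 = -1) (P : TensorCyclicPres F A i n) (a b a' b' : Fin n → ℕ)
    {l : List (Fin n)} (hl : l.Nodup) :
    Ml P a b l * Ml P a' b' l =
      i ^ (3 * (l.map (fun k => a' k * b k)).sum) •
        Ml P (fun k => a k + a' k) (fun k => b k + b' k) l := by
  induction l with
  | nil => simp [Ml]
  | cons k l ih =>
    rw [List.nodup_cons] at hl
    obtain ⟨hk, hl'⟩ := hl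
    have hcomm : Commute (Ml P a b l) (P.x k ^ a' k * P.y k ^ b' k) :=
      (st4_fac_comm_Ml P hk a' b' a b).symm
    rw [Ml_cons, Ml_cons, Ml_cons, hcomm.mul_mul_mul_comm, st4_fac_mul hi, ih hl',
      smul_mul_assoc, mul_smul_comm, smul_smul, ← pow_add, List.map_cons, List.sum_cons]
    congr 2
    ring

lemma MM_mul (hi : i ^ 2 = -1) (P : TensorCyclicPres F A i n) (a b a' b' : Fin n → ℕ) :
    MM P a b * MM P a' b' =
      i ^ (3 * ∑ k, a' k * b k) • MM P (fun k => a k + a' k) (fun k => b k + b' k) := by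
  rw [Fin.sum_univ_def]
  exact Ml_mul hi P a b a' b' (List.nodup_finRange n)

end Part2

section Part3

variable {F A : Type*} [Field F] [DivisionRing A] [Algebra F A]
variable {i : F} {n : ℕ}

lemma st4_smul_mul_smul (c d : F) (X Y : A) :
    (c • X) * (d • Y) = (c * d) • (X * Y) := by
  rw [smul_mul_assoc, mul_smul_comm, smul_smul]

lemma MM_congr (P : TensorCyclicPres F A i n) {a b a' b' : Fin n → ℕ}
    (ha : ∀ k, a k = a' k) (hb : ∀ k, b k = b' k) : MM P a b = MM P a' b' := by
  rw [show a = a' from funext ha, show b = b' from funext hb]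

lemma st4_sum_probe_left {n : ℕ} (a : Fin n → ℕ) (k : Fin n) :
    ∑ j, a j * (if j = k then 1 else 0) = a k := by
  simp [mul_ite, Finset.sum_ite_eq']

lemma st4_sum_probe_right {n : ℕ} (b : Fin n → ℕ) (k : Fin n) :
    ∑ j, (if j = k then 1 else 0) * b j = b k := by
  simp [ite_mul, Finset.sum_ite_eq']

lemma MM_central [CharZero F] (hi : i ^ 2 = -1) (P : TensorCyclicPres F A i n)
    {a b : Fin n → ℕ} {c : F} (h : MM P a b = algebraMap F A c) (k : Fin n) :
    4 ∣ a k ∧ 4 ∣ b k := by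
  constructor
  · -- probe with y_k detects a k
    set PY : A := MM P (fun _ => 0) (fun j => if j = k then 1 else 0) with hPY
    set N : A := MM P a (fun j => b j + if j = k then 1 else 0) with hN
    have e1 : MM P a b * PY = N := by
      rw [hPY, MM_mul hi]
      have hz : (3 * ∑ j, (fun _ => (0:ℕ)) j * b j) = 0 := by simp
      rw [hz, pow_zero, one_smul, hN]
      exact MM_congr P (fun j => by simp) (fun j => rfl)
    have e2 : PY * MM P a b = i ^ (3 * a k) • N := by
      rw [hPY, MM_mul hi]
      have hs : (3 * ∑ j, a j * (fun j => if j = k then 1 else 0) j) = 3 * a k := by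
        rw [st4_sum_probe_left]
      rw [hs, hN]
      congr 1
      exact MM_congr P (fun j => by simp) (fun j => add_comm _ _)
    have hcent : MM P a b * PY = PY * MM P a b := by
      rw [h]; exact Algebra.commutes c PY
    have hsm : (1 : F) • N = i ^ (3 * a k) • N := by
      rw [one_smul]
      calc N = MM P a b * PY := e1.symm
        _ = PY * MM P a b := hcent
        _ = i ^ (3 * a k) • N := e2
    have hone : (i : F) ^ 0 = i ^ (3 * a k) := by
      rw [pow_zero]; exact st4_smul_cancel (MM_ne_zero P _ _) hsm
    have hc := (st4_i_pow_eq_iff hi 0 (3 * a k)).mp hone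
    have hdvd : (4 : ℕ) ∣ 3 * a k := by
      have h0 : ((3 * a k : ℕ) : ZMod 4) = 0 := by rw [← hc]; norm_num
      exact (ZMod.natCast_eq_zero_iff _ 4).mp h0
    omega
  · -- probe with x_k detects b k
    set PX : A := MM P (fun j => if j = k then 1 else 0) (fun _ => 0) with hPX
    set N : A := MM P (fun j => a j + if j = k then 1 else 0) b with hN
    have e1 : MM P a b * PX = i ^ (3 * b k) • N := by
      rw [hPX, MM_mul hi]
      have hs : (3 * ∑ j, (fun j => if j = k then 1 else 0) j * b j) = 3 * b k := by
        rw [st4_sum_probe_right]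
      rw [hs, hN]
      exact congrArg (fun t => i ^ (3 * b k) • t)
        (MM_congr P (fun j => rfl) (fun j => by simp))
    have e2 : PX * MM P a b = N := by
      rw [hPX, MM_mul hi]
      have hz : (3 * ∑ j, a j * (fun _ => (0:ℕ)) j) = 0 := by simp
      rw [hz, pow_zero, one_smul, hN]
      exact MM_congr P (fun j => add_comm _ _) (fun j => by simp)
    have hcent : MM P a b * PX = PX * MM P a b := by
      rw [h]; exact Algebra.commutes c PX
    have hsm : i ^ (3 * b k) • N = (1 : F) • N := by
      rw [one_smul]
      calc i ^ (3 * b k) • N = MM P a b * PX := e1.symm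
        _ = PX * MM P a b := hcent
        _ = N := e2
    have hone : (i : F) ^ (3 * b k) = i ^ 0 := by
      rw [pow_zero]; exact st4_smul_cancel (MM_ne_zero P _ _) hsm
    have hc := (st4_i_pow_eq_iff hi (3 * b k) 0).mp hone
    have hdvd : (4 : ℕ) ∣ 3 * b k := by
      have h0 : ((3 * b k : ℕ) : ZMod 4) = 0 := by rw [hc]; norm_num
      exact (ZMod.natCast_eq_zero_iff _ 4).mp h0
    omega

lemma MM_in_range [CharZero F] (hi : i ^ 2 = -1) (P : TensorCyclicPres F A i n)
    {a b : Fin n → ℕ} {s : ℕ} (h : i ^ s • MM P a b ∈ Set.range (algebraMap F A))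
    (k : Fin n) : 4 ∣ a k ∧ 4 ∣ b k := by
  obtain ⟨γ, hγ⟩ := h
  have hs : (i : F) ^ s ≠ 0 := pow_ne_zero _ (st4_i_ne_zero hi)
  have hMM : MM P a b = algebraMap F A ((i ^ s)⁻¹ * γ) := by
    rw [map_mul, hγ, Algebra.smul_def, ← mul_assoc, ← map_mul, inv_mul_cancel₀ hs,
      map_one, one_mul]
  exact MM_central hi P hMM k

lemma st4_anticomm_pow4 {R : Type*} [Ring R] {b z : R} (h : z * b = -(b * z)) :
    (b + z) ^ 4 = b ^ 4 + z ^ 4 + 2 * (b ^ 2 * z ^ 2) := by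
  have e1 : z ^ 2 * b = b * z ^ 2 := by
    calc z ^ 2 * b = z * (z * b) := by rw [pow_two, mul_assoc]
      _ = -(z * (b * z)) := by rw [h, mul_neg]
      _ = -((z * b) * z) := by rw [mul_assoc]
      _ = (b * z) * z := by rw [h, neg_mul, neg_neg]
      _ = b * z ^ 2 := by rw [pow_two, mul_assoc]
  have e2 : z ^ 2 * b ^ 2 = b ^ 2 * z ^ 2 := by
    calc z ^ 2 * b ^ 2 = z ^ 2 * (b * b) := by rw [pow_two b]
      _ = b * (b * z ^ 2) := by rw [← mul_assoc, e1, mul_assoc, e1]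
      _ = b ^ 2 * z ^ 2 := by rw [← mul_assoc, ← pow_two b]
  have h2 : (b + z) ^ 2 = b ^ 2 + z ^ 2 := by
    simp only [pow_two]
    rw [add_mul, mul_add, mul_add, h]
    abel
  have hb4 : b ^ 2 * b ^ 2 = b ^ 4 := by rw [← pow_add]
  have hz4 : z ^ 2 * z ^ 2 = z ^ 4 := by rw [← pow_add]
  calc (b + z) ^ 4 = ((b + z) ^ 2) ^ 2 := by rw [← pow_mul]
    _ = (b ^ 2 + z ^ 2) ^ 2 := by rw [h2]
    _ = b ^ 4 + z ^ 4 + 2 * (b ^ 2 * z ^ 2) := by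
        rw [pow_two, add_mul, mul_add, mul_add, e2, hb4, hz4, two_mul]
        abel

lemma st4_half [CharZero F] {u : A} {d : F} (h : 2 * u = algebraMap F A d) :
    u = algebraMap F A (d / 2) := by
  have h20 : (2 : A) ≠ 0 := by
    intro h0
    have h2A : algebraMap F A 2 = 0 := by rw [map_ofNat]; exact h0
    exact two_ne_zero ((algebraMap F A).injective (by rw [h2A, map_zero]))
  apply mul_left_cancel₀ h20
  rw [h]
  rw [show (2 : A) = algebraMap F A 2 from (map_ofNat _ 2).symm, ← map_mul]
  congr 1
  field_simp

lemma st4_key4 : ∀ av bv aw bw az bz : ZMod 4,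
    av + av + (az + az) = 0 → bv + bv + (bz + bz) = 0 →
    aw + aw + (az + az) = 0 → bw + bw + (bz + bz) = 0 →
    aw * bv - av * bw = (av * bz - az * bv) - (aw * bz - az * bw) := by decide

lemma st4_sq_mul_sq (hi : i ^ 2 = -1) (P : TensorCyclicPres F A i n)
    (a b a' b' : Fin n → ℕ) :
    (MM P a b) ^ 2 * (MM P a' b') ^ 2 =
      i ^ (3 * ∑ k, a k * b k +
        3 * ∑ k, a' k * b' k + 3 * ∑ k, (a' k + a' k) * (b k + b k)) •
        MM P (fun k => a k + a k + (a' k + a' k)) (fun k => b k + b k + (b' k + b' k)) := by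
  rw [pow_two, pow_two, MM_mul hi, MM_mul hi, st4_smul_mul_smul, MM_mul hi, smul_smul,
    ← pow_add, ← pow_add]

lemma st4_mul_mul_sq (hi : i ^ 2 = -1) (P : TensorCyclicPres F A i n)
    (a b a' b' a2 b2 : Fin n → ℕ) :
    (MM P a b * MM P a' b') * (MM P a2 b2) ^ 2 =
      i ^ (3 * ∑ k, a' k * b k +
        3 * ∑ k, a2 k * b2 k + 3 * ∑ k, (a2 k + a2 k) * (b k + b' k)) •
        MM P (fun k => a k + a' k + (a2 k + a2 k)) (fun k => b k + b' k + (b2 k + b2 k)) := by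
  rw [pow_two, MM_mul hi, MM_mul hi, st4_smul_mul_smul, MM_mul hi, smul_smul,
    ← pow_add, ← pow_add]

end Part3

/-- In a division tensor product of `n` cyclic algebras of degree 4 (with a fixed
presentation), a monomial `z` in a basis of distinct monomials spanning a Kummer space
cannot anti-commute with two other basis monomials `v, w`. -/
theorem statement4 {F A : Type*} [Field F] [CharZero F] [DivisionRing A] [Algebra F A]
    (i : F) (hi : i ^ 2 = -1) (n : ℕ) (hn : 1 ≤ n)
    (P : TensorCyclicPres F A i n) (hdim : Module.finrank F A = 16 ^ n)
    (v w z : A) (hv : P.IsMonomial v) (hw : P.IsMonomial w) (hz : P.IsMonomial z)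
    (hvw : v ≠ w) (hvz : v ≠ z) (hwz : w ≠ z)
    (hK : ∀ u ∈ Submodule.span F ({v, w, z} : Set A), u ^ 4 ∈ Set.range (algebraMap F A)) :
    ¬ (z * v = -(v * z) ∧ z * w = -(w * z)) := by
  rintro ⟨hzv, hzw⟩
  obtain ⟨Av, Bv, hAvlt, hBvlt, hveq⟩ :
      ∃ a b : Fin n → ℕ, (∀ k, a k < 4) ∧ (∀ k, b k < 4) ∧ v = MM P a b := by
    obtain ⟨a0, b0, h0⟩ := hv
    exact ⟨fun k => (a0 k : ℕ), fun k => (b0 k : ℕ), fun k => (a0 k).isLt,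
      fun k => (b0 k).isLt, h0⟩
  obtain ⟨Aw, Bw, hAwlt, hBwlt, hweq⟩ :
      ∃ a b : Fin n → ℕ, (∀ k, a k < 4) ∧ (∀ k, b k < 4) ∧ w = MM P a b := by
    obtain ⟨a0, b0, h0⟩ := hw
    exact ⟨fun k => (a0 k : ℕ), fun k => (b0 k : ℕ), fun k => (a0 k).isLt,
      fun k => (b0 k).isLt, h0⟩
  obtain ⟨Az, Bz, hAzlt, hBzlt, hzeq⟩ :
      ∃ a b : Fin n → ℕ, (∀ k, a k < 4) ∧ (∀ k, b k < 4) ∧ z = MM P a b := by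
    obtain ⟨a0, b0, h0⟩ := hz
    exact ⟨fun k => (a0 k : ℕ), fun k => (b0 k : ℕ), fun k => (a0 k).isLt,
      fun k => (b0 k).isLt, h0⟩
  -- span memberships and Kummer scalars
  have mv : v ∈ Submodule.span F ({v, w, z} : Set A) := Submodule.subset_span (by simp)
  have mw : w ∈ Submodule.span F ({v, w, z} : Set A) := Submodule.subset_span (by simp)
  have mz : z ∈ Submodule.span F ({v, w, z} : Set A) := Submodule.subset_span (by simp)
  obtain ⟨cv, hcv⟩ := hK v mv
  obtain ⟨cw, hcw⟩ := hK w mw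
  obtain ⟨cz, hcz⟩ := hK z mz
  obtain ⟨c1, hc1⟩ := hK (v + z) (Submodule.add_mem _ mv mz)
  obtain ⟨c2, hc2⟩ := hK (w + z) (Submodule.add_mem _ mw mz)
  obtain ⟨cs, hcs⟩ := hK (v + w) (Submodule.add_mem _ mv mw)
  obtain ⟨c3, hc3⟩ := hK (v + w + z) (Submodule.add_mem _ (Submodule.add_mem _ mv mw) mz)
  -- v²z² and w²z² are scalars
  have hvz2 : v ^ 2 * z ^ 2 = algebraMap F A ((c1 - cv - cz) / 2) := by
    apply st4_half
    have hexp : 2 * (v ^ 2 * z ^ 2) = (v + z) ^ 4 - v ^ 4 - z ^ 4 := by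
      rw [st4_anticomm_pow4 hzv]; abel
    rw [hexp, ← hc1, ← hcv, ← hcz, map_sub, map_sub]
  have hwz2 : w ^ 2 * z ^ 2 = algebraMap F A ((c2 - cw - cz) / 2) := by
    apply st4_half
    have hexp : 2 * (w ^ 2 * z ^ 2) = (w + z) ^ 4 - w ^ 4 - z ^ 4 := by
      rw [st4_anticomm_pow4 hzw]; abel
    rw [hexp, ← hc2, ← hcw, ← hcz, map_sub, map_sub]
  -- exponent divisibilities from v²z² and w²z²
  have hdv : ∀ k, 4 ∣ Av k + Av k + (Az k + Az k) ∧ 4 ∣ Bv k + Bv k + (Bz k + Bz k) := by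
    have hmem : i ^ (3 * ∑ k, Av k * Bv k + 3 * ∑ k, Az k * Bz k +
          3 * ∑ k, (Az k + Az k) * (Bv k + Bv k)) •
        MM P (fun k => Av k + Av k + (Az k + Az k)) (fun k => Bv k + Bv k + (Bz k + Bz k))
        ∈ Set.range (algebraMap F A) := by
      refine ⟨(c1 - cv - cz) / 2, ?_⟩
      rw [← hvz2, hveq, hzeq, st4_sq_mul_sq hi]
    exact fun k => MM_in_range hi P hmem k
  have hdw : ∀ k, 4 ∣ Aw k + Aw k + (Az k + Az k) ∧ 4 ∣ Bw k + Bw k + (Bz k + Bz k) := by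
    have hmem : i ^ (3 * ∑ k, Aw k * Bw k + 3 * ∑ k, Az k * Bz k +
          3 * ∑ k, (Az k + Az k) * (Bw k + Bw k)) •
        MM P (fun k => Aw k + Aw k + (Az k + Az k)) (fun k => Bw k + Bw k + (Bz k + Bz k))
        ∈ Set.range (algebraMap F A) := by
      refine ⟨(c2 - cw - cz) / 2, ?_⟩
      rw [← hwz2, hweq, hzeq, st4_sq_mul_sq hi]
    exact fun k => MM_in_range hi P hmem k
  -- anti-commutation exponent relations
  have hacv : ((3 * ∑ k, Av k * Bz k : ℕ) : ZMod 4)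
      = ((2 + 3 * ∑ k, Az k * Bv k : ℕ) : ZMod 4) := by
    refine (st4_i_pow_eq_iff hi _ _).mp
      (st4_smul_cancel (MM_ne_zero P (fun k => Az k + Av k) (fun k => Bz k + Bv k)) ?_)
    calc i ^ (3 * ∑ k, Av k * Bz k) • MM P (fun k => Az k + Av k) (fun k => Bz k + Bv k)
        = MM P Az Bz * MM P Av Bv := (MM_mul hi P Az Bz Av Bv).symm
      _ = z * v := by rw [hzeq, hveq]
      _ = -(v * z) := hzv
      _ = -(i ^ (3 * ∑ k, Az k * Bv k) •
            MM P (fun k => Av k + Az k) (fun k => Bv k + Bz k)) := by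
          rw [hveq, hzeq, MM_mul hi]
      _ = (i ^ 2 * i ^ (3 * ∑ k, Az k * Bv k)) •
            MM P (fun k => Av k + Az k) (fun k => Bv k + Bz k) := by
          rw [hi, neg_one_mul, neg_smul]
      _ = i ^ (2 + 3 * ∑ k, Az k * Bv k) •
            MM P (fun k => Az k + Av k) (fun k => Bz k + Bv k) := by
          rw [← pow_add,
            MM_congr P (fun k => add_comm (Av k) (Az k)) (fun k => add_comm (Bv k) (Bz k))]
  have hacw : ((3 * ∑ k, Aw k * Bz k : ℕ) : ZMod 4)
      = ((2 + 3 * ∑ k, Az k * Bw k : ℕ) : ZMod 4) := by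
    refine (st4_i_pow_eq_iff hi _ _).mp
      (st4_smul_cancel (MM_ne_zero P (fun k => Az k + Aw k) (fun k => Bz k + Bw k)) ?_)
    calc i ^ (3 * ∑ k, Aw k * Bz k) • MM P (fun k => Az k + Aw k) (fun k => Bz k + Bw k)
        = MM P Az Bz * MM P Aw Bw := (MM_mul hi P Az Bz Aw Bw).symm
      _ = z * w := by rw [hzeq, hweq]
      _ = -(w * z) := hzw
      _ = -(i ^ (3 * ∑ k, Az k * Bw k) •
            MM P (fun k => Aw k + Az k) (fun k => Bw k + Bz k)) := by
          rw [hweq, hzeq, MM_mul hi]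
      _ = (i ^ 2 * i ^ (3 * ∑ k, Az k * Bw k)) •
            MM P (fun k => Aw k + Az k) (fun k => Bw k + Bz k) := by
          rw [hi, neg_one_mul, neg_smul]
      _ = i ^ (2 + 3 * ∑ k, Az k * Bw k) •
            MM P (fun k => Az k + Aw k) (fun k => Bz k + Bw k) := by
          rw [← pow_add,
            MM_congr P (fun k => add_comm (Aw k) (Az k)) (fun k => add_comm (Bw k) (Bz k))]
  push_cast at hacv hacw
  -- the symplectic parity computation in ZMod 4
  have hsum : ∑ k, ((Aw k : ZMod 4) * (Bv k : ZMod 4) - (Av k : ZMod 4) * (Bw k : ZMod 4))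
      = ∑ k, (((Av k : ZMod 4) * (Bz k : ZMod 4) - (Az k : ZMod 4) * (Bv k : ZMod 4))
          - ((Aw k : ZMod 4) * (Bz k : ZMod 4) - (Az k : ZMod 4) * (Bw k : ZMod 4))) := by
    refine Finset.sum_congr rfl fun k _ => ?_
    have d1 := (ZMod.natCast_eq_zero_iff _ 4).mpr (hdv k).1
    have d2 := (ZMod.natCast_eq_zero_iff _ 4).mpr (hdv k).2
    have d3 := (ZMod.natCast_eq_zero_iff _ 4).mpr (hdw k).1
    have d4 := (ZMod.natCast_eq_zero_iff _ 4).mpr (hdw k).2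
    push_cast at d1 d2 d3 d4
    exact st4_key4 _ _ _ _ _ _ d1 d2 d3 d4
  simp only [Finset.sum_sub_distrib] at hsum
  -- v and w commute
  have hvw_pow : (i : F) ^ (3 * ∑ k, Aw k * Bv k) = i ^ (3 * ∑ k, Av k * Bw k) := by
    rw [st4_i_pow_eq_iff hi]
    push_cast
    linear_combination 3 * hsum + hacv - hacw
  have hvw_comm : v * w = w * v := by
    rw [hveq, hweq, MM_mul hi, MM_mul hi, hvw_pow,
      MM_congr P (fun k => add_comm (Av k) (Aw k)) (fun k => add_comm (Bv k) (Bw k))]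
  -- z anti-commutes with v + w, so (vw)z² is a scalar
  have hzs : z * (v + w) = -((v + w) * z) := by
    rw [mul_add, add_mul, hzv, hzw, neg_add]
  have hsz2 : (v + w) ^ 2 * z ^ 2 = algebraMap F A ((c3 - cs - cz) / 2) := by
    apply st4_half
    have hexp : 2 * ((v + w) ^ 2 * z ^ 2) = (v + w + z) ^ 4 - (v + w) ^ 4 - z ^ 4 := by
      rw [st4_anticomm_pow4 hzs]; abel
    rw [hexp, ← hc3, ← hcs, ← hcz, map_sub, map_sub]
  have hsq : (v + w) ^ 2 = v ^ 2 + 2 * (v * w) + w ^ 2 := by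
    simp only [pow_two]
    rw [add_mul, mul_add, mul_add, ← hvw_comm, two_mul]
    abel
  have hvwz2 : v * w * z ^ 2
      = algebraMap F A (((c3 - cs - cz) / 2 - (c1 - cv - cz) / 2 - (c2 - cw - cz) / 2) / 2) := by
    apply st4_half
    have hexp : (v + w) ^ 2 * z ^ 2 = v ^ 2 * z ^ 2 + 2 * (v * w * z ^ 2) + w ^ 2 * z ^ 2 := by
      rw [hsq, add_mul, add_mul, mul_assoc]
    have h2 : 2 * (v * w * z ^ 2)
        = (v + w) ^ 2 * z ^ 2 - v ^ 2 * z ^ 2 - w ^ 2 * z ^ 2 := by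
      rw [hexp]; abel
    rw [h2, hsz2, hvz2, hwz2, ← map_sub, ← map_sub]
  have hdvw : ∀ k, 4 ∣ Av k + Aw k + (Az k + Az k) ∧ 4 ∣ Bv k + Bw k + (Bz k + Bz k) := by
    have hmem : i ^ (3 * ∑ k, Aw k * Bv k + 3 * ∑ k, Az k * Bz k +
          3 * ∑ k, (Az k + Az k) * (Bv k + Bw k)) •
        MM P (fun k => Av k + Aw k + (Az k + Az k)) (fun k => Bv k + Bw k + (Bz k + Bz k))
        ∈ Set.range (algebraMap F A) := by
      refine ⟨((c3 - cs - cz) / 2 - (c1 - cv - cz) / 2 - (c2 - cw - cz) / 2) / 2, ?_⟩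
      rw [← hvwz2, hveq, hweq, hzeq, st4_mul_mul_sq hi]
    exact fun k => MM_in_range hi P hmem k
  -- conclude v = w, contradiction
  have hAeq : ∀ k, Av k = Aw k := by
    intro k
    have d1 := (ZMod.natCast_eq_zero_iff _ 4).mpr (hdv k).1
    have d5 := (ZMod.natCast_eq_zero_iff _ 4).mpr (hdvw k).1
    push_cast at d1 d5
    have hz4 : ((Av k : ZMod 4)) = (Aw k : ZMod 4) := by linear_combination d1 - d5
    have hmod : Av k % 4 = Aw k % 4 := (ZMod.natCast_eq_natCast_iff _ _ _).mp hz4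
    have h1 := hAvlt k
    have h2 := hAwlt k
    omega
  have hBeq : ∀ k, Bv k = Bw k := by
    intro k
    have d1 := (ZMod.natCast_eq_zero_iff _ 4).mpr (hdv k).2
    have d5 := (ZMod.natCast_eq_zero_iff _ 4).mpr (hdvw k).2
    push_cast at d1 d5
    have hz4 : ((Bv k : ZMod 4)) = (Bw k : ZMod 4) := by linear_combination d1 - d5
    have hmod : Bv k % 4 = Bw k % 4 := (ZMod.natCast_eq_natCast_iff _ _ _).mp hz4
    have h1 := hBvlt k
    have h2 := hBwlt k
    omega
  exact hvw (by rw [hveq, hweq]; exact MM_congr P hAeq hBeq)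
end

section
/- There do not exist F-linearly independent elements v, w, z ∈ A such that the F-span of {v, w, z} is a Kummer space and vw = i·wv, wz = i·zw, and zv = i·vz (i.e., there is no directed 3-cycle). -/
/-!
For `x, y` in a Kummer space, `(x + y) ^ 4 + (x - y) ^ 4 - 2 x ^ 4 - 2 y ^ 4` is a scalar, hence so
is the part `mixedQuartic x y` of `(x + y) ^ 4` of degree two in both `x` and `y`. Under the cycle
relations, this part is a nonzero multiple of `v w² z` for `(x, y) = (v + z, w)` and of `v² w z`
for `(x, y) = (w + z, v)`. In a division ring two such scalars force `w ∈ F ∙ v`.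
-/

def mixedQuartic {R : Type*} [Ring R] (x y : R) : R :=
  x * x * y * y + x * y * x * y + x * y * y * x + y * x * x * y + y * x * y * x + y * y * x * x

theorem add_pow_four_add_sub_pow_four {R : Type*} [Ring R] (x y : R) :
    (x + y) ^ 4 + (x - y) ^ 4 = 2 * (x ^ 4 + y ^ 4 + mixedQuartic x y) := by
  rw [mixedQuartic]; noncomm_ring

section Algebra

variable {F A : Type*} [Field F] [Ring A] [Algebra F A]

def Submodule.IsKummer (V : Submodule F A) : Prop :=
  ∀ u ∈ V, u ^ 4 ∈ (⊥ : Subalgebra F A)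

theorem Subalgebra.mem_bot_of_smul_mem_bot {a : F} {x : A} (ha : a ≠ 0)
    (h : a • x ∈ (⊥ : Subalgebra F A)) : x ∈ (⊥ : Subalgebra F A) :=
  (Submodule.smul_mem_iff (Subalgebra.toSubmodule ⊥) ha).mp h

theorem Submodule.IsKummer.mixedQuartic_mem [NeZero (2 : F)] {V : Submodule F A}
    (hV : V.IsKummer) {x y : A} (hx : x ∈ V) (hy : y ∈ V) :
    mixedQuartic x y ∈ (⊥ : Subalgebra F A) := by
  have hsum : (2 : F) • (x ^ 4 + y ^ 4 + mixedQuartic x y) ∈ (⊥ : Subalgebra F A) := by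
    rw [two_smul, ← two_mul, ← add_pow_four_add_sub_pow_four]
    exact add_mem (hV _ (add_mem hx hy)) (hV _ (sub_mem hx hy))
  have h := Subalgebra.mem_bot_of_smul_mem_bot two_ne_zero hsum
  convert sub_mem (sub_mem h (hV x hx)) (hV y hy) using 1
  abel

theorem mul_eq_smul_mul_symm {x y : A} {c c' : F} (h : x * y = c • (y * x)) (hc : c' * c = 1) :
    y * x = c' • (x * y) := by
  rw [h, smul_smul, hc, one_smul]

theorem mul_mul_eq_smul_of_mul_eq_smul {x y : A} {c : F} (h : y * x = c • (x * y)) (t : A) :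
    y * (x * t) = c • (x * (y * t)) := by
  rw [← mul_assoc, h, smul_mul_assoc, mul_assoc]

variable {i : F} {v w z : A}

/- In `mixedQuartic (x + x') y`, the six words in two `x`'s and two `y`'s add up to the Gaussian
binomial `[4 choose 2]_q = (1 + q²)(1 + q + q²)` times `x x y y`, where `y x = q • (x y)`; it
vanishes as `q² = -1`. Likewise for `x'`, so only the words in `x, x', y, y` survive. -/
theorem mixedQuartic_add_left_of_cycle (hi : i ^ 2 = -1) (hwv : w * v = (-i) • (v * w))
    (hzw : z * w = (-i) • (w * z)) (hzv : z * v = i • (v * z)) :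
    mixedQuartic (v + z) w = (-4 - 4 * i) • (v * w * (w * z)) := by
  simp only [mixedQuartic, mul_add, add_mul, mul_assoc, smul_mul_assoc, mul_smul_comm, smul_smul,
    hwv, hzw, hzv, mul_mul_eq_smul_of_mul_eq_smul hwv, mul_mul_eq_smul_of_mul_eq_smul hzw]
  match_scalars <;> grind

theorem mixedQuartic_add_right_of_cycle (hi : i ^ 2 = -1) (hwv : w * v = (-i) • (v * w))
    (hzw : z * w = (-i) • (w * z)) (hzv : z * v = i • (v * z)) :
    mixedQuartic (w + z) v = (4 - 4 * i) • (v * v * (w * z)) := by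
  simp only [mixedQuartic, mul_add, add_mul, mul_assoc, smul_mul_assoc, mul_smul_comm, smul_smul,
    hwv, hzw, hzv, mul_mul_eq_smul_of_mul_eq_smul hwv, mul_mul_eq_smul_of_mul_eq_smul hzv]
  match_scalars <;> grind

end Algebra

theorem mem_span_singleton_of_mul_mul_mem_bot {F A : Type*} [Field F] [DivisionRing A]
    [Algebra F A] {x y c : A} (hx : x ≠ 0) (hc : c ≠ 0)
    (hxy : x * y * c ∈ (⊥ : Subalgebra F A)) (hxx : x * x * c ∈ (⊥ : Subalgebra F A)) :
    y ∈ F ∙ x := by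
  obtain ⟨p, hp⟩ := Algebra.mem_bot.mp hxy
  obtain ⟨q, hq⟩ := Algebra.mem_bot.mp hxx
  have hq0 : q ≠ 0 := by
    rintro rfl
    exact mul_ne_zero (mul_ne_zero hx hx) hc (by rw [← hq, map_zero])
  refine Submodule.mem_span_singleton.mpr ⟨p / q, ?_⟩
  have : x * ((p / q) • x) * c = x * y * c := by
    rw [mul_smul_comm, smul_mul_assoc, ← hq, ← hp, Algebra.smul_def, ← map_mul,
      div_mul_cancel₀ p hq0]
  exact mul_left_cancel₀ hx (mul_right_cancel₀ hc this)

/-- There is no directed 3-cycle: there are no `F`-linearly independent `v, w, z`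
spanning a Kummer space (of degree 4) with `v w = i · w v`, `w z = i · z w`, and
`z v = i · v z`. -/
theorem statement5 {F A : Type*} [Field F] [CharZero F] [DivisionRing A] [Algebra F A]
    (i : F) (hi : i ^ 2 = -1) :
    ¬ ∃ v w z : A, LinearIndependent F ![v, w, z] ∧
      (∀ u ∈ Submodule.span F ({v, w, z} : Set A), u ^ 4 ∈ Set.range (algebraMap F A)) ∧
      v * w = i • (w * v) ∧ w * z = i • (z * w) ∧ z * v = i • (v * z) := by
  rintro ⟨v, w, z, hli, hK, hvw, hwz, hzv⟩
  have hV : (Submodule.span F ({v, w, z} : Set A)).IsKummer := hK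
  have mem_v : v ∈ Submodule.span F ({v, w, z} : Set A) := Submodule.subset_span (by simp)
  have mem_w : w ∈ Submodule.span F ({v, w, z} : Set A) := Submodule.subset_span (by simp)
  have mem_z : z ∈ Submodule.span F ({v, w, z} : Set A) := Submodule.subset_span (by simp)
  have hi' : -i * i = 1 := by linear_combination -hi
  have hwv := mul_eq_smul_mul_symm hvw hi'
  have hzw := mul_eq_smul_mul_symm hwz hi'
  have h32 : (32 : F) ≠ 0 := by norm_num
  have hvwwz : v * w * (w * z) ∈ (⊥ : Subalgebra F A) := by
    refine Subalgebra.mem_bot_of_smul_mem_bot (a := -4 - 4 * i) ?_ ?_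
    · intro h; apply h32; linear_combination (-4 + 4 * i) * h + 16 * hi
    rw [← mixedQuartic_add_left_of_cycle hi hwv hzw hzv]
    exact hV.mixedQuartic_mem (add_mem mem_v mem_z) mem_w
  have hvvwz : v * v * (w * z) ∈ (⊥ : Subalgebra F A) := by
    refine Subalgebra.mem_bot_of_smul_mem_bot (a := 4 - 4 * i) ?_ ?_
    · intro h; apply h32; linear_combination (4 + 4 * i) * h + 16 * hi
    rw [← mixedQuartic_add_right_of_cycle hi hwv hzw hzv]
    exact hV.mixedQuartic_mem (add_mem mem_w mem_z) mem_v
  have hw_mem : w ∈ F ∙ v := mem_span_singleton_of_mul_mul_mem_bot (hli.ne_zero 0)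
    (mul_ne_zero (hli.ne_zero 1) (hli.ne_zero 2)) hvwwz hvvwz
  exact absurd hw_mem (by simpa using hli.notMem_span_image (s := {0}) (x := 1) (by simp))
end

section
/- Let v₁, v₂, v₃, v₄ ∈ A be F-linearly independent elements whose F-span is a Kummer space, forming a directed 4-cycle: v₁v₂ = i·v₂v₁, v₂v₃ = i·v₃v₂, v₃v₄ = i·v₄v₃, v₄v₁ = i·v₁v₄. Assume moreover that v₁v₃ = i^a·v₃v₁ and v₂v₄ = i^b·v₄v₂ for some integers a, b. Then v₁v₃ = −v₃v₁ and v₂v₄ = −v₄v₂. -/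
set_option maxHeartbeats 2000000

/-- Pair case: if `x` and `z` commute, `x ≠ 0`, `z` is not a scalar multiple of `x`,
and all `(x + m•z)^4` are scalars, we get a contradiction. -/
lemma kummer_aux1 {F A : Type*} [Field F] [CharZero F] [DivisionRing A] [Algebra F A]
    (i : F) (hi : i ^ 2 = -1) (x z : A) (hx : x ≠ 0)
    (hzx : ∀ c : F, z ≠ c • x)
    (hK : ∀ m : F, (x + m • z) ^ 4 ∈ Set.range (algebraMap F A))
    (hcomm : z * x = x * z) : False := by
  have hI : i * i = -1 := by rw [← sq]; exact hi
  have gzx : ∀ w : A, z * (x * w) = x * (z * w) := fun w => by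
    rw [← mul_assoc, hcomm, mul_assoc]
  have I₀ : (x + (1:F) • z) ^ 4 - (x + (-1:F) • z) ^ 4
      + (-i) • ((x + i • z) ^ 4 - (x + (-i) • z) ^ 4)
      = (16 : F) • (x * (x * (x * z))) := by
    simp only [pow_succ, pow_zero, one_mul, one_smul, neg_smul, mul_add, add_mul,
      mul_neg, neg_mul, neg_neg, mul_assoc, smul_mul_assoc, mul_smul_comm,
      hcomm, gzx, smul_smul, hI, smul_neg, mul_one, smul_add, smul_sub]
    module
  have hmem : ∀ m : F, (x + m • z) ^ 4 ∈ (⊥ : Subalgebra F A) := fun m =>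
    Algebra.mem_bot.2 (hK m)
  have hW : ((16 : F)) • (x * (x * (x * z))) ∈ (⊥ : Subalgebra F A) := by
    rw [← I₀]
    exact add_mem (sub_mem (hmem 1) (hmem (-1)))
      (Subalgebra.smul_mem _ (sub_mem (hmem i) (hmem (-i))) _)
  have h16 : (16 : F) ≠ 0 := by norm_num
  have hN : (x * (x * (x * z))) ∈ (⊥ : Subalgebra F A) := by
    have := Subalgebra.smul_mem _ hW (16 : F)⁻¹
    rwa [smul_smul, inv_mul_cancel₀ h16, one_smul] at this
  obtain ⟨f, hf⟩ := Algebra.mem_bot.1 hN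
  have hx4 : x ^ 4 ∈ (⊥ : Subalgebra F A) := by
    have := hmem 0
    rwa [zero_smul, add_zero] at this
  obtain ⟨α, hα⟩ := Algebra.mem_bot.1 hx4
  have hα0 : α ≠ 0 := by
    intro h0
    apply pow_ne_zero 4 hx
    rw [← hα, h0, map_zero]
  have key : α • z = f • x := by
    calc α • z = algebraMap F A α * z := Algebra.smul_def α z
      _ = x ^ 4 * z := by rw [hα]
      _ = x * (x * (x * (x * z))) := by
          rw [pow_succ, pow_succ, pow_succ, pow_succ, pow_zero, one_mul]
          simp only [mul_assoc]
      _ = x * algebraMap F A f := by rw [hf]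
      _ = algebraMap F A f * x := (Algebra.commutes f x).symm
      _ = f • x := (Algebra.smul_def f x).symm
  exact hzx (α⁻¹ * f) (by
    calc z = α⁻¹ • (α • z) := by rw [smul_smul, inv_mul_cancel₀ hα0, one_smul]
      _ = α⁻¹ • (f • x) := by rw [key]
      _ = (α⁻¹ * f) • x := by rw [smul_smul])

/-- Triple case: a path `x → y → z` with `i`-commutation and diagonal factor `-i`
inside a Kummer space leads to a contradiction when `z ∉ F·x`. -/
lemma kummer_aux2 {F A : Type*} [Field F] [CharZero F] [DivisionRing A] [Algebra F A]
    (i : F) (hi : i ^ 2 = -1) (x y z : A)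
    (hx : x ≠ 0) (hy : y ≠ 0) (hz : z ≠ 0)
    (hzx : ∀ c : F, z ≠ c • x)
    (hK : ∀ l m : F, ((x + l • y) + m • z) ^ 4 ∈ Set.range (algebraMap F A))
    (hxy : x * y = i • (y * x)) (hyz : y * z = i • (z * y))
    (hxz : x * z = (-i) • (z * x)) : False := by
  have hI : i * i = -1 := by rw [← sq]; exact hi
  have gxy : ∀ w : A, x * (y * w) = i • (y * (x * w)) := fun w => by
    rw [← mul_assoc, hxy, smul_mul_assoc, mul_assoc]
  have gyz : ∀ w : A, y * (z * w) = i • (z * (y * w)) := fun w => by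
    rw [← mul_assoc, hyz, smul_mul_assoc, mul_assoc]
  have gxz : ∀ w : A, x * (z * w) = (-i) • (z * (x * w)) := fun w => by
    rw [← mul_assoc, hxz, smul_mul_assoc, mul_assoc]
  have I₁ : ((x + (1:F) • y) + (1:F) • z) ^ 4 - ((x + (-1:F) • y) + (1:F) • z) ^ 4
      - ((x + (1:F) • y) + (-1:F) • z) ^ 4 + ((x + (-1:F) • y) + (-1:F) • z) ^ 4
      = (16 + 16 * i) • (z * (y * (x * x))) := by
    simp only [pow_succ, pow_zero, one_mul, one_smul, neg_smul, mul_add, add_mul,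
      mul_neg, neg_mul, neg_neg, mul_assoc, smul_mul_assoc, mul_smul_comm,
      hxy, hyz, hxz, gxy, gyz, gxz, smul_smul, hI, smul_neg, mul_one]
    module
  have I₂ : ((x + (1:F) • y) + (1:F) • z) ^ 4 - ((x + (-1:F) • y) + (1:F) • z) ^ 4
      + ((x + (1:F) • y) + (-1:F) • z) ^ 4 - ((x + (-1:F) • y) + (-1:F) • z) ^ 4
      = (16 + 16 * i) • (z * (z * (y * x))) := by
    simp only [pow_succ, pow_zero, one_mul, one_smul, neg_smul, mul_add, add_mul,
      mul_neg, neg_mul, neg_neg, mul_assoc, smul_mul_assoc, mul_smul_comm,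
      hxy, hyz, hxz, gxy, gyz, gxz, smul_smul, hI, smul_neg, mul_one]
    module
  have hc : (16 + 16 * i : F) ≠ 0 := by
    intro h
    have h1 : (16 : F) * (1 + i) = 0 := by ring_nf; linear_combination h
    have h2 : (1 + i : F) = 0 := by
      rcases mul_eq_zero.1 h1 with h' | h'
      · exact absurd h' (by norm_num)
      · exact h'
    have : i = -1 := by linear_combination h2
    rw [this] at hi
    norm_num at hi
  have hmem : ∀ l m : F, ((x + l • y) + m • z) ^ 4 ∈ (⊥ : Subalgebra F A) := fun l m =>
    Algebra.mem_bot.2 (hK l m)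
  have hM₁ : ((16 + 16 * i : F)) • (z * (y * (x * x))) ∈ (⊥ : Subalgebra F A) := by
    rw [← I₁]
    exact add_mem (sub_mem (sub_mem (hmem 1 1) (hmem (-1) 1)) (hmem 1 (-1))) (hmem (-1) (-1))
  have hM₂ : ((16 + 16 * i : F)) • (z * (z * (y * x))) ∈ (⊥ : Subalgebra F A) := by
    rw [← I₂]
    exact sub_mem (add_mem (sub_mem (hmem 1 1) (hmem (-1) 1)) (hmem 1 (-1))) (hmem (-1) (-1))
  have hN₁ : (z * (y * (x * x))) ∈ (⊥ : Subalgebra F A) := by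
    have := Subalgebra.smul_mem _ hM₁ (16 + 16 * i : F)⁻¹
    rwa [smul_smul, inv_mul_cancel₀ hc, one_smul] at this
  have hN₂ : (z * (z * (y * x))) ∈ (⊥ : Subalgebra F A) := by
    have := Subalgebra.smul_mem _ hM₂ (16 + 16 * i : F)⁻¹
    rwa [smul_smul, inv_mul_cancel₀ hc, one_smul] at this
  obtain ⟨f, hf⟩ := Algebra.mem_bot.1 hN₁
  obtain ⟨g, hg⟩ := Algebra.mem_bot.1 hN₂
  have hf0 : f ≠ 0 := by
    intro h0
    apply mul_ne_zero hz (mul_ne_zero hy (mul_ne_zero hx hx))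
    rw [← hf, h0, map_zero]
  have key : f • z = g • x := by
    calc f • z = algebraMap F A f * z := Algebra.smul_def f z
      _ = z * algebraMap F A f := Algebra.commutes f z
      _ = z * (z * (y * (x * x))) := by rw [hf]
      _ = (z * (z * (y * x))) * x := by simp only [mul_assoc]
      _ = algebraMap F A g * x := by rw [hg]
      _ = g • x := (Algebra.smul_def g x).symm
  exact hzx (f⁻¹ * g) (by
    calc z = f⁻¹ • (f • z) := by rw [smul_smul, inv_mul_cancel₀ hf0, one_smul]
      _ = f⁻¹ • (g • x) := by rw [key]
      _ = (f⁻¹ * g) • x := by rw [smul_smul])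

/-- If `F`-linearly independent `v₁, v₂, v₃, v₄` span a Kummer space (of degree 4) and
form a directed 4-cycle (`v₁v₂ = i·v₂v₁`, `v₂v₃ = i·v₃v₂`, `v₃v₄ = i·v₄v₃`,
`v₄v₁ = i·v₁v₄`), and the diagonals satisfy `v₁v₃ = i^a·v₃v₁`, `v₂v₄ = i^b·v₄v₂`
for some integers `a, b`, then the diagonal pairs anti-commute. -/
theorem statement6 {F A : Type*} [Field F] [CharZero F] [DivisionRing A] [Algebra F A]
    (i : F) (hi : i ^ 2 = -1) (v₁ v₂ v₃ v₄ : A)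
    (hli : LinearIndependent F ![v₁, v₂, v₃, v₄])
    (hK : ∀ u ∈ Submodule.span F ({v₁, v₂, v₃, v₄} : Set A),
      u ^ 4 ∈ Set.range (algebraMap F A))
    (h12 : v₁ * v₂ = i • (v₂ * v₁)) (h23 : v₂ * v₃ = i • (v₃ * v₂))
    (h34 : v₃ * v₄ = i • (v₄ * v₃)) (h41 : v₄ * v₁ = i • (v₁ * v₄))
    (a b : ℤ) (h13 : v₁ * v₃ = (i ^ a) • (v₃ * v₁)) (h24 : v₂ * v₄ = (i ^ b) • (v₄ * v₂)) :
    v₁ * v₃ = -(v₃ * v₁) ∧ v₂ * v₄ = -(v₄ * v₂) := by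
  have hI : i * i = -1 := by rw [← sq]; exact hi
  have hi0 : i ≠ 0 := by
    intro h
    rw [h] at hi
    norm_num at hi
  -- linear independence consequences
  have ind : ∀ g : Fin 4 → F,
      g 0 • v₁ + g 1 • v₂ + g 2 • v₃ + g 3 • v₄ = 0 → ∀ t, g t = 0 := by
    intro g hg
    refine Fintype.linearIndependent_iff.1 hli g ?_
    simpa [Fin.sum_univ_four] using hg
  have hv1 : v₁ ≠ 0 := fun h => by
    simpa using ind ![1, 0, 0, 0] (by simp [h]) 0
  have hv2 : v₂ ≠ 0 := fun h => by
    simpa using ind ![0, 1, 0, 0] (by simp [h]) 1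
  have hv3 : v₃ ≠ 0 := fun h => by
    simpa using ind ![0, 0, 1, 0] (by simp [h]) 2
  have hv4 : v₄ ≠ 0 := fun h => by
    simpa using ind ![0, 0, 0, 1] (by simp [h]) 3
  have h31 : ∀ c : F, v₃ ≠ c • v₁ := fun c h => by
    simpa using ind ![c, 0, -1, 0] (by simp [h]) 2
  have h13' : ∀ c : F, v₁ ≠ c • v₃ := fun c h => by
    simpa using ind ![-1, 0, c, 0] (by simp [h]) 0
  have h42 : ∀ c : F, v₄ ≠ c • v₂ := fun c h => by
    simpa using ind ![0, c, 0, -1] (by simp [h]) 3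
  have h24' : ∀ c : F, v₂ ≠ c • v₄ := fun c h => by
    simpa using ind ![0, -1, 0, c] (by simp [h]) 1
  -- span memberships
  have m1 : v₁ ∈ Submodule.span F ({v₁, v₂, v₃, v₄} : Set A) :=
    Submodule.subset_span (by simp)
  have m2 : v₂ ∈ Submodule.span F ({v₁, v₂, v₃, v₄} : Set A) :=
    Submodule.subset_span (by simp)
  have m3 : v₃ ∈ Submodule.span F ({v₁, v₂, v₃, v₄} : Set A) :=
    Submodule.subset_span (by simp)
  have m4 : v₄ ∈ Submodule.span F ({v₁, v₂, v₃, v₄} : Set A) :=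
    Submodule.subset_span (by simp)
  have hKt : ∀ (x y z : A), x ∈ Submodule.span F ({v₁, v₂, v₃, v₄} : Set A) →
      y ∈ Submodule.span F ({v₁, v₂, v₃, v₄} : Set A) →
      z ∈ Submodule.span F ({v₁, v₂, v₃, v₄} : Set A) →
      ∀ l m : F, ((x + l • y) + m • z) ^ 4 ∈ Set.range (algebraMap F A) := by
    intro x y z hx hy hz l m
    exact hK _ (add_mem (add_mem hx (Submodule.smul_mem _ _ hy)) (Submodule.smul_mem _ _ hz))
  have hKp : ∀ (x z : A), x ∈ Submodule.span F ({v₁, v₂, v₃, v₄} : Set A) →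
      z ∈ Submodule.span F ({v₁, v₂, v₃, v₄} : Set A) →
      ∀ m : F, (x + m • z) ^ 4 ∈ Set.range (algebraMap F A) := by
    intro x z hx hz m
    exact hK _ (add_mem hx (Submodule.smul_mem _ _ hz))
  -- reduce zpow to residue mod 4
  have hi4 : i ^ (4 : ℤ) = 1 := by
    have h4 : i ^ (4 : ℕ) = 1 := by
      have h4' : i ^ (4 : ℕ) = (i ^ 2) ^ 2 := by ring
      rw [h4', hi]; ring
    exact_mod_cast h4
  have hred : ∀ c : ℤ, i ^ c = i ^ (c % 4) := by
    intro c
    conv_lhs => rw [← Int.mul_ediv_add_emod c 4]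
    rw [zpow_add₀ hi0, zpow_mul, hi4, one_zpow, one_mul]
  have hcases : ∀ c : ℤ, i ^ c = 1 ∨ i ^ c = i ∨ i ^ c = -1 ∨ i ^ c = -i := by
    intro c
    have h04 : c % 4 = 0 ∨ c % 4 = 1 ∨ c % 4 = 2 ∨ c % 4 = 3 := by omega
    rw [hred c]
    rcases h04 with h | h | h | h <;> rw [h]
    · left; exact zpow_zero i
    · right; left; exact zpow_one i
    · right; right; left
      rw [show (2 : ℤ) = (2 : ℕ) by rfl, zpow_natCast, hi]
    · right; right; right
      rw [show (3 : ℤ) = (3 : ℕ) by rfl, zpow_natCast]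
      calc i ^ (3 : ℕ) = i ^ 2 * i := by ring
        _ = -i := by rw [hi]; ring
  constructor
  · -- v₁ v₃
    rcases hcases a with h | h | h | h
    · -- ε = 1 : contradiction via pair (v₁, v₃)
      rw [h, one_smul] at h13
      exact (kummer_aux1 i hi v₁ v₃ hv1 h31 (hKp _ _ m1 m3) h13.symm).elim
    · -- ε = i : contradiction via triple (v₃, v₄, v₁)
      rw [h] at h13
      have hxz : v₃ * v₁ = (-i) • (v₁ * v₃) := by
        rw [h13, smul_smul]
        have : -i * i = 1 := by rw [neg_mul, hI]; ring
        rw [this, one_smul]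
      exact (kummer_aux2 i hi v₃ v₄ v₁ hv3 hv4 hv1 h13' (hKt _ _ _ m3 m4 m1) h34 h41 hxz).elim
    · -- ε = -1 : done
      rw [h, neg_smul, one_smul] at h13
      exact h13
    · -- ε = -i : contradiction via triple (v₁, v₂, v₃)
      rw [h] at h13
      exact (kummer_aux2 i hi v₁ v₂ v₃ hv1 hv2 hv3 h31 (hKt _ _ _ m1 m2 m3) h12 h23 h13).elim
  · -- v₂ v₄
    rcases hcases b with h | h | h | h
    · rw [h, one_smul] at h24
      exact (kummer_aux1 i hi v₂ v₄ hv2 h42 (hKp _ _ m2 m4) h24.symm).elim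
    · rw [h] at h24
      have hxz : v₄ * v₂ = (-i) • (v₂ * v₄) := by
        rw [h24, smul_smul]
        have : -i * i = 1 := by rw [neg_mul, hI]; ring
        rw [this, one_smul]
      exact (kummer_aux2 i hi v₄ v₁ v₂ hv4 hv1 hv2 h24' (hKt _ _ _ m4 m1 m2) h41 h12 hxz).elim
    · rw [h, neg_smul, one_smul] at h24
      exact h24
    · rw [h] at h24
      exact (kummer_aux2 i hi v₂ v₃ v₄ hv2 hv3 hv4 h42 (hKt _ _ _ m2 m3 m4) h23 h34 h24).elim
end

section
/- There do not exist F-linearly independent elements v, w, z, t ∈ A whose F-span is a Kummer space and which satisfy vw = i·wv, zv = i·vz, wt = i·tw, zt = i·tz, vt = −tv, and wz = −zw. -/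
set_option maxHeartbeats 2000000 in
/-- There are no `F`-linearly independent `v, w, z, t` spanning a Kummer space
(of degree 4) with `v w = i·w v`, `z v = i·v z`, `w t = i·t w`, `z t = i·t z`,
`v t = -t v`, and `w z = -z w`. -/
theorem statement7 {F A : Type*} [Field F] [CharZero F] [DivisionRing A] [Algebra F A]
    (i : F) (hi : i ^ 2 = -1) :
    ¬ ∃ v w z t : A, LinearIndependent F ![v, w, z, t] ∧
      (∀ u ∈ Submodule.span F ({v, w, z, t} : Set A), u ^ 4 ∈ Set.range (algebraMap F A)) ∧
      v * w = i • (w * v) ∧ z * v = i • (v * z) ∧ w * t = i • (t * w) ∧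
      z * t = i • (t * z) ∧ v * t = -(t * v) ∧ w * z = -(z * w) := by
  rintro ⟨v, w, z, t, hli, hK, hvw, hzv, hwt, hzt, hvt, hwz⟩
  have hii : i * i = -1 := by rw [← sq]; exact hi
  have hi0 : i ≠ 0 := by intro h; rw [h] at hi; norm_num at hi
  -- nonvanishing of the generators
  have hv0 : v ≠ 0 := by simpa using hli.ne_zero 0
  have hw0 : w ≠ 0 := by simpa using hli.ne_zero 1
  have hz0 : z ≠ 0 := by simpa using hli.ne_zero 2
  have ht0 : t ≠ 0 := by simpa using hli.ne_zero 3
  -- oriented sorting rules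
  have r1 : w * v = (-i) • (v * w) := by
    rw [hvw, smul_smul, neg_mul, hii, neg_neg, one_smul]
  have r2 : z * v = i • (v * z) := hzv
  have r3 : t * v = -(v * t) := by rw [hvt, neg_neg]
  have r4 : z * w = -(w * z) := by rw [hwz, neg_neg]
  have r5 : t * w = (-i) • (w * t) := by
    rw [hwt, smul_smul, neg_mul, hii, neg_neg, one_smul]
  have r6 : t * z = (-i) • (z * t) := by
    rw [hzt, smul_smul, neg_mul, hii, neg_neg, one_smul]
  have r1c : ∀ x : A, w * (v * x) = (-i) • (v * (w * x)) := fun x => by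
    rw [← mul_assoc, r1, smul_mul_assoc, mul_assoc]
  have r2c : ∀ x : A, z * (v * x) = i • (v * (z * x)) := fun x => by
    rw [← mul_assoc, r2, smul_mul_assoc, mul_assoc]
  have r3c : ∀ x : A, t * (v * x) = -(v * (t * x)) := fun x => by
    rw [← mul_assoc, r3, neg_mul, mul_assoc]
  have r4c : ∀ x : A, z * (w * x) = -(w * (z * x)) := fun x => by
    rw [← mul_assoc, r4, neg_mul, mul_assoc]
  have r5c : ∀ x : A, t * (w * x) = (-i) • (w * (t * x)) := fun x => by
    rw [← mul_assoc, r5, smul_mul_assoc, mul_assoc]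
  have r6c : ∀ x : A, t * (z * x) = (-i) • (z * (t * x)) := fun x => by
    rw [← mul_assoc, r6, smul_mul_assoc, mul_assoc]
  -- the key identity: sign-averaging extracts the multidegree (1,1,1,1) part
  have key : (v+w+z+t)^4 - (v+w+z-t)^4 - (v+w-z+t)^4 + (v+w-z-t)^4
      - (v-w+z+t)^4 + (v-w+z-t)^4 + (v-w-z+t)^4 - (v-w-z-t)^4
      = (16*(i^3 - i)) • (v*(w*(z*t))) := by
    simp only [pow_succ, pow_zero, one_mul, sub_eq_add_neg, mul_add, add_mul,
      mul_neg, neg_mul, neg_neg, neg_add_rev, smul_mul_assoc, mul_smul_comm,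
      smul_smul, smul_add, smul_neg, mul_assoc, r1, r2, r3, r4, r5, r6,
      r1c, r2c, r3c, r4c, r5c, r6c]
    module
  -- all eight elements lie in the span, so their fourth powers are scalars
  have hvS : v ∈ Submodule.span F ({v, w, z, t} : Set A) :=
    Submodule.subset_span (by simp)
  have hwS : w ∈ Submodule.span F ({v, w, z, t} : Set A) :=
    Submodule.subset_span (by simp)
  have hzS : z ∈ Submodule.span F ({v, w, z, t} : Set A) :=
    Submodule.subset_span (by simp)
  have htS : t ∈ Submodule.span F ({v, w, z, t} : Set A) :=
    Submodule.subset_span (by simp)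
  obtain ⟨c1, hc1⟩ := hK _ (add_mem (add_mem (add_mem hvS hwS) hzS) htS)
  obtain ⟨c2, hc2⟩ := hK _ (sub_mem (add_mem (add_mem hvS hwS) hzS) htS)
  obtain ⟨c3, hc3⟩ := hK _ (add_mem (sub_mem (add_mem hvS hwS) hzS) htS)
  obtain ⟨c4, hc4⟩ := hK _ (sub_mem (sub_mem (add_mem hvS hwS) hzS) htS)
  obtain ⟨c5, hc5⟩ := hK _ (add_mem (add_mem (sub_mem hvS hwS) hzS) htS)
  obtain ⟨c6, hc6⟩ := hK _ (sub_mem (add_mem (sub_mem hvS hwS) hzS) htS)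
  obtain ⟨c7, hc7⟩ := hK _ (add_mem (sub_mem (sub_mem hvS hwS) hzS) htS)
  obtain ⟨c8, hc8⟩ := hK _ (sub_mem (sub_mem (sub_mem hvS hwS) hzS) htS)
  have hμ : algebraMap F A (c1 - c2 - c3 + c4 - c5 + c6 + c7 - c8)
      = (16*(i^3 - i)) • (v*(w*(z*t))) := by
    rw [← key]
    simp only [map_sub, map_add, hc1, hc2, hc3, hc4, hc5, hc6, hc7, hc8]
  -- the product v w z t anticommutes with v
  have hMv : (v*(w*(z*t)))*v = (i*i) • (v*(v*(w*(z*t)))) := by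
    simp only [mul_assoc, r1c, r2c, r3, r3c, smul_smul, mul_smul_comm,
      smul_neg, neg_neg, mul_neg, neg_mul, smul_mul_assoc]
    module
  have hMv' : (v*(w*(z*t)))*v = -(v*(v*(w*(z*t)))) := by
    rw [hMv, hii, neg_smul, one_smul]
  -- but scalars commute with v
  have e : algebraMap F A (c1 - c2 - c3 + c4 - c5 + c6 + c7 - c8) * v
      = v * algebraMap F A (c1 - c2 - c3 + c4 - c5 + c6 + c7 - c8) :=
    Algebra.commutes _ v
  rw [hμ, smul_mul_assoc, mul_smul_comm, hMv', smul_neg] at e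
  set c : F := 16*(i^3 - i) with hc
  set X : A := v*(v*(w*(z*t))) with hX
  have h2 : c • X + c • X = 0 := by nth_rewrite 1 [← e]; exact neg_add_cancel _
  rw [← two_smul F] at h2
  have h3 : c • X = 0 := by
    have h20 : (2 : F) ≠ 0 := two_ne_zero
    calc c • X = ((2:F)⁻¹ * 2) • (c • X) := by rw [inv_mul_cancel₀ h20, one_smul]
      _ = (2:F)⁻¹ • ((2:F) • (c • X)) := by rw [mul_smul]
      _ = 0 := by rw [h2, smul_zero]
  have hc0 : c ≠ 0 := by
    have : c = -32 * i := by rw [hc]; linear_combination 16*i*hi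
    rw [this]
    exact mul_ne_zero (by norm_num) hi0
  have hX0 : X = 0 := by
    calc X = (c⁻¹ * c) • X := by rw [inv_mul_cancel₀ hc0, one_smul]
      _ = c⁻¹ • (c • X) := by rw [mul_smul]
      _ = 0 := by rw [h3, smul_zero]
  exact (mul_ne_zero hv0 (mul_ne_zero hv0 (mul_ne_zero hw0 (mul_ne_zero hz0 ht0)))) hX0
end

section
/- There do not exist F-linearly independent elements v, w, z, t ∈ A whose F-span is a Kummer space and which satisfy vw = i·wv, vz = i·zv, wz = i·zw, wt = i·tw, zt = i·tz, and vt = −tv. -/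
set_option maxHeartbeats 2000000 in
/-- There are no `F`-linearly independent `v, w, z, t` spanning a Kummer space
(of degree 4) with `v w = i·w v`, `v z = i·z v`, `w z = i·z w`, `w t = i·t w`,
`z t = i·t z`, and `v t = -t v`. -/
theorem statement8 {F A : Type*} [Field F] [CharZero F] [DivisionRing A] [Algebra F A]
    (i : F) (hi : i ^ 2 = -1) :
    ¬ ∃ v w z t : A, LinearIndependent F ![v, w, z, t] ∧
      (∀ u ∈ Submodule.span F ({v, w, z, t} : Set A), u ^ 4 ∈ Set.range (algebraMap F A)) ∧
      v * w = i • (w * v) ∧ v * z = i • (z * v) ∧ w * z = i • (z * w) ∧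
      w * t = i • (t * w) ∧ z * t = i • (t * z) ∧ v * t = -(t * v) := by
  rintro ⟨v, w, z, t, hli, hK, hvw, hvz, hwz, hwt, hzt, hvt⟩
  have hii : -i * i = (1 : F) := by linear_combination -hi
  have hi3 : i ^ 3 = -i := by linear_combination i * hi
  have hi4 : i ^ 4 = 1 := by linear_combination (i ^ 2 - 1) * hi
  -- reversed commutation relations
  have hwv : w * v = (-i) • (v * w) := by rw [hvw, smul_smul, hii, one_smul]
  have hzv : z * v = (-i) • (v * z) := by rw [hvz, smul_smul, hii, one_smul]
  have hzw : z * w = (-i) • (w * z) := by rw [hwz, smul_smul, hii, one_smul]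
  have htw : t * w = (-i) • (w * t) := by rw [hwt, smul_smul, hii, one_smul]
  have htz : t * z = (-i) • (z * t) := by rw [hzt, smul_smul, hii, one_smul]
  have htv : t * v = ((-1 : F)) • (v * t) := by
    rw [neg_one_smul, hvt, neg_neg]
  -- associated variants
  have hwv' : ∀ x : A, w * (v * x) = (-i) • (v * (w * x)) := fun x => by
    rw [← mul_assoc, hwv, smul_mul_assoc, mul_assoc]
  have hzv' : ∀ x : A, z * (v * x) = (-i) • (v * (z * x)) := fun x => by
    rw [← mul_assoc, hzv, smul_mul_assoc, mul_assoc]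
  have hzw' : ∀ x : A, z * (w * x) = (-i) • (w * (z * x)) := fun x => by
    rw [← mul_assoc, hzw, smul_mul_assoc, mul_assoc]
  have htw' : ∀ x : A, t * (w * x) = (-i) • (w * (t * x)) := fun x => by
    rw [← mul_assoc, htw, smul_mul_assoc, mul_assoc]
  have htz' : ∀ x : A, t * (z * x) = (-i) • (z * (t * x)) := fun x => by
    rw [← mul_assoc, htz, smul_mul_assoc, mul_assoc]
  have htv' : ∀ x : A, t * (v * x) = ((-1 : F)) • (v * (t * x)) := fun x => by
    rw [← mul_assoc, htv, smul_mul_assoc, mul_assoc]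
  -- the key identity
  have key : (v + w + t) ^ 4 - (v + w - t) ^ 4 = (-(8 * i)) • (v * (w * (w * t))) := by
    simp only [pow_succ, pow_zero, one_mul, sub_eq_add_neg, mul_add, add_mul, mul_neg, neg_mul,
      neg_neg, neg_add, smul_mul_assoc, mul_smul_comm, smul_smul, smul_add, smul_neg,
      hwv, hwv', hzv, hzv', hzw, hzw', htw, htw', htz, htz', htv, htv', mul_assoc]
    match_scalars <;>
      first
        | ring1
        | (ring_nf; try simp only [hi, hi3, hi4]; ring1)
  -- both span elements have scalar fourth powers
  have hmemv : v ∈ Submodule.span F ({v, w, z, t} : Set A) :=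
    Submodule.subset_span (by simp)
  have hmemw : w ∈ Submodule.span F ({v, w, z, t} : Set A) :=
    Submodule.subset_span (by simp)
  have hmemt : t ∈ Submodule.span F ({v, w, z, t} : Set A) :=
    Submodule.subset_span (by simp)
  obtain ⟨k₁, hk₁⟩ := hK (v + w + t) (add_mem (add_mem hmemv hmemw) hmemt)
  obtain ⟨k₂, hk₂⟩ := hK (v + w - t) (sub_mem (add_mem hmemv hmemw) hmemt)
  have hX : (algebraMap F A) (k₁ - k₂) = (-(8 * i)) • (v * (w * (w * t))) := by
    rw [map_sub, hk₁, hk₂, key]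
  -- the scalar commutes with z
  have comm : (algebraMap F A) (k₁ - k₂) * z = z * (algebraMap F A) (k₁ - k₂) :=
    (Algebra.commutes _ _)
  rw [hX, smul_mul_assoc, mul_smul_comm] at comm
  have hi0 : i ≠ 0 := by
    intro h; rw [h] at hi; norm_num at hi
  have h8 : (-(8 * i)) ≠ 0 := by
    simp [hi0]
  have comm2 : (v * (w * (w * t))) * z = z * (v * (w * (w * t))) :=
    smul_right_injective A h8 comm
  -- normal order both sides
  have hL : (v * (w * (w * t))) * z = (-i) • (v * (w * (w * (z * t)))) := by
    simp only [mul_assoc, htz, htz', smul_mul_assoc, mul_smul_comm, smul_smul]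
  have hR : z * (v * (w * (w * t))) = i • (v * (w * (w * (z * t)))) := by
    simp only [hzv', hzw', smul_mul_assoc, mul_smul_comm, smul_smul]
    match_scalars <;>
      first
        | ring1
        | (ring_nf; try simp only [hi, hi3, hi4]; ring1)
  rw [hL, hR] at comm2
  -- contradiction
  have hv0 : v ≠ 0 := by
    have := hli.ne_zero 0; simpa using this
  have hw0 : w ≠ 0 := by
    have := hli.ne_zero 1; simpa using this
  have hz0 : z ≠ 0 := by
    have := hli.ne_zero 2; simpa using this
  have ht0 : t ≠ 0 := by
    have := hli.ne_zero 3; simpa using this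
  have hX0 : v * (w * (w * (z * t))) ≠ 0 :=
    mul_ne_zero hv0 (mul_ne_zero hw0 (mul_ne_zero hw0 (mul_ne_zero hz0 ht0)))
  have : ((-i) - i) • (v * (w * (w * (z * t)))) = 0 := by
    rw [sub_smul, comm2, sub_self]
  rcases smul_eq_zero.mp this with h | h
  · apply hi0
    have : (2 : F) * i = 0 := by linear_combination -h
    have h2 : (2 : F) ≠ 0 := two_ne_zero
    exact (mul_eq_zero.mp this).resolve_left h2
  · exact hX0 h
end

section
/- Let r ≥ 2 with r ≠ 4, and let v₁, …, v_r be distinct monomials of A whose F-span is a Kummer space. Then it is impossible that v_k·v_{k+1} = i·v_{k+1}·v_k for all 1 ≤ k ≤ r−1 and v_r·v₁ = i·v₁·v_r; that is, there are no directed cycles of length other than 4. -/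
open Submodule

section RootOfUnity

variable {F : Type*} [Field F] {i : F}

theorem isPrimitiveRoot_four_of_sq_eq_neg_one (hi : i ^ 2 = -1) (h2 : (2 : F) ≠ 0) :
    IsPrimitiveRoot i 4 := by
  refine IsPrimitiveRoot.iff_orderOf.mpr (orderOf_eq_prime_pow (p := 2) (n := 1) ?_ ?_)
  · rw [pow_one, hi, neg_eq_iff_add_eq_zero, one_add_one_eq_two]
    exact h2
  · rw [show 2 ^ (1 + 1) = 2 * 2 from rfl, pow_mul, hi, neg_one_sq]

theorem pow_val_add (hi : i ^ 4 = 1) (a b : ZMod 4) :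
    i ^ (a + b).val = i ^ a.val * i ^ b.val := by
  rw [← pow_add, ZMod.val_add, ← pow_eq_pow_mod _ hi]

theorem pow_val_injective (hi : IsPrimitiveRoot i 4) {a b : ZMod 4}
    (h : i ^ a.val = i ^ b.val) : a = b :=
  ZMod.val_injective 4 (hi.pow_inj (ZMod.val_lt a) (ZMod.val_lt b) h)

end RootOfUnity

section

variable {F A : Type*} [Field F] [Ring A] [Algebra F A] {i : F}

def QCommute (i : F) (γ : ZMod 4) (u w : A) : Prop :=
  u * w = i ^ γ.val • (w * u)

namespace QCommute

variable {γ γ' : ZMod 4} {u u' w w' : A}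

theorem of_commute (h : Commute u w) : QCommute i 0 u w := by
  simp [QCommute, h.eq]

theorem smul_right (h : QCommute i γ u w) (μ : F) : QCommute i γ u (μ • w) := by
  rw [QCommute, mul_smul_comm, h, smul_mul_assoc, smul_comm]

theorem mul_left (hi : i ^ 4 = 1) (h : QCommute i γ u w) (h' : QCommute i γ' u' w) :
    QCommute i (γ + γ') (u * u') w := by
  rw [QCommute, mul_assoc, h', mul_smul_comm, ← mul_assoc, h, smul_mul_assoc, smul_smul,
    pow_val_add hi, mul_comm, mul_assoc]

theorem mul_right (hi : i ^ 4 = 1) (h : QCommute i γ u w) (h' : QCommute i γ' u w') :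
    QCommute i (γ + γ') u (w * w') := by
  rw [QCommute, ← mul_assoc, h, smul_mul_assoc, mul_assoc, h', mul_smul_comm, smul_smul,
    pow_val_add hi, mul_assoc]

theorem symm (hi : i ^ 4 = 1) (h : QCommute i γ u w) : QCommute i (-γ) w u := by
  rw [QCommute, h, smul_smul, ← pow_val_add hi, neg_add_cancel, ZMod.val_zero, pow_zero,
    one_smul]

theorem pow_left (hi : i ^ 4 = 1) (h : QCommute i γ u w) (m : ℕ) :
    QCommute i (m * γ) (u ^ m) w := by
  induction m with
  | zero => simpa using of_commute (Commute.one_left w)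
  | succ m ih => simpa [pow_succ, add_mul] using ih.mul_left hi h

theorem pow_right (hi : i ^ 4 = 1) (h : QCommute i γ u w) (m : ℕ) :
    QCommute i (m * γ) u (w ^ m) := by
  simpa using ((h.symm hi).pow_left hi m).symm hi

theorem list_prod_left (hi : i ^ 4 = 1) {ι : Type*} {f : ι → A} {g : ι → ZMod 4} :
    ∀ l : List ι, (∀ s ∈ l, QCommute i (g s) (f s) w) →
      QCommute i (l.map g).sum (l.map f).prod w
  | [], _ => by simpa using of_commute (Commute.one_left w)
  | s :: l, h => by
    simpa using (h s (by simp)).mul_left hi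
      (list_prod_left hi l fun t ht => h t (List.mem_cons_of_mem s ht))

theorem list_prod_right (hi : i ^ 4 = 1) {ι : Type*} {f : ι → A} {g : ι → ZMod 4} :
    ∀ l : List ι, (∀ s ∈ l, QCommute i (g s) u (f s)) →
      QCommute i (l.map g).sum u (l.map f).prod
  | [], _ => by simpa using of_commute (Commute.one_right u)
  | s :: l, h => by
    simpa using (h s (by simp)).mul_right hi
      (list_prod_right hi l fun t ht => h t (List.mem_cons_of_mem s ht))

theorem unique (hi : IsPrimitiveRoot i 4) (h : QCommute i γ u w) (h' : QCommute i γ' u w)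
    (hwu : w * u ≠ 0) : γ = γ' :=
  pow_val_injective hi (smul_left_injective F hwu ((Eq.symm h).trans h'))

end QCommute

end

section Polarization

variable {F A : Type*} [Field F] [Ring A] [Algebra F A] {i : F}

def gaussianLift (hi : i ^ 2 = -1) : GaussianInt →+* F :=
  Zsqrtd.lift ⟨i, by rw [← sq, hi]; simp⟩

theorem gaussianLift_sqrtd (hi : i ^ 2 = -1) : gaussianLift hi Zsqrtd.sqrtd = i := by
  simp [gaussianLift]

theorem gaussianLift_injective [CharZero F] (hi : i ^ 2 = -1) :
    Function.Injective (gaussianLift hi) :=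
  Zsqrtd.lift_injective _ fun n h => by nlinarith [sq_nonneg n]

def IsKummerSpace (V : Submodule F A) : Prop :=
  ∀ v ∈ V, v ^ 4 ∈ Set.range (algebraMap F A)

def quarticPolarization (a b c d : A) : A :=
  (a + b + c + d) ^ 4 - ((a + b + c) ^ 4 + (a + b + d) ^ 4 + (a + c + d) ^ 4 + (b + c + d) ^ 4)
    + ((a + b) ^ 4 + (a + c) ^ 4 + (a + d) ^ 4 + (b + c) ^ 4 + (b + d) ^ 4 + (c + d) ^ 4)
    - (a ^ 4 + b ^ 4 + c ^ 4 + d ^ 4)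

theorem quarticPolarization_eq (a b c d : A) :
    quarticPolarization a b c d
      = a * b * c * d + a * b * d * c + a * c * b * d + a * c * d * b + a * d * b * c
        + a * d * c * b + b * a * c * d + b * a * d * c + b * c * a * d + b * c * d * a
        + b * d * a * c + b * d * c * a + c * a * b * d + c * a * d * b + c * b * a * d
        + c * b * d * a + c * d * a * b + c * d * b * a + d * a * b * c + d * a * c * b
        + d * b * a * c + d * b * c * a + d * c * a * b + d * c * b * a := by
  simp only [quarticPolarization, pow_succ, pow_zero, one_mul, mul_add, add_mul, mul_assoc]
  abel

theorem IsKummerSpace.quarticPolarization_mem_bot {V : Submodule F A} (hV : IsKummerSpace V)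
    {a b c d : A} (ha : a ∈ V) (hb : b ∈ V) (hc : c ∈ V) (hd : d ∈ V) :
    quarticPolarization a b c d ∈ (⊥ : Subalgebra F A) := by
  have h4 : ∀ v ∈ V, v ^ 4 ∈ (⊥ : Subalgebra F A) := fun v hv =>
    Algebra.mem_bot.mpr (hV v hv)
  unfold quarticPolarization
  repeat' first | assumption | apply h4 | apply add_mem | apply sub_mem

/-- Reordering an arrangement of the letters `u, u, w, w'` into `u u w w'` multiplies it by
`β`, `δ`, `ε` each time `w` is moved past `u`, `w'` past `u`, `w'` past `w`; this is the sum of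
these factors over the twelve arrangements. -/
def arrangementSum (x y z : ZMod 4) : GaussianInt :=
  let β : GaussianInt := Zsqrtd.sqrtd ^ x.val
  let δ : GaussianInt := Zsqrtd.sqrtd ^ y.val
  let ε : GaussianInt := Zsqrtd.sqrtd ^ z.val
  (1 + β + β * δ + β ^ 2 + β ^ 2 * δ + β ^ 2 * δ ^ 2)
    + ε * (1 + δ + β * δ + δ ^ 2 + β * δ ^ 2 + β ^ 2 * δ ^ 2)

theorem arrangementSum_ne_zero :
    ∀ x z : ZMod 4, x ≠ 0 → z ≠ -x → 2 * arrangementSum x (-x) z ≠ 0 := by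
  decide

theorem arrangementSum_zero : 2 * arrangementSum 0 0 0 ≠ 0 := by
  decide

theorem IsKummerSpace.arrangementSum_smul_mem_bot (hi : i ^ 2 = -1) {V : Submodule F A}
    (hV : IsKummerSpace V) {u w w' : A} (hu : u ∈ V) (hw : w ∈ V) (hw' : w' ∈ V)
    {x y z : ZMod 4} (hx : QCommute i x w u) (hy : QCommute i y w' u) (hz : QCommute i z w' w) :
    gaussianLift hi (2 * arrangementSum x y z) • (u * u * w * w') ∈ (⊥ : Subalgebra F A) := by
  have hx' : ∀ t, w * (u * t) = i ^ x.val • (u * (w * t)) := fun t => by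
    rw [← mul_assoc, hx, smul_mul_assoc, mul_assoc]
  convert hV.quarticPolarization_mem_bot hu hu hw hw' using 1
  rw [quarticPolarization_eq]
  simp only [mul_assoc, hx', show w * u = _ from hx, show w' * u = _ from hy,
    show w' * w = _ from hz, mul_smul_comm, smul_mul_assoc, smul_smul]
  simp only [arrangementSum, map_mul, map_add, map_pow, map_one, map_ofNat, gaussianLift_sqrtd]
  module

end Polarization

section KummerSpace

variable {F A : Type*} [Field F] [DivisionRing A] [Algebra F A] {i : F}

theorem QCommute.eq_zero_of_mem_bot (hi : IsPrimitiveRoot i 4) {γ : ZMod 4} {u w : A}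
    (h : QCommute i γ u w) (hw : w ∈ (⊥ : Subalgebra F A)) (hu : u ≠ 0) (hw0 : w ≠ 0) :
    γ = 0 := by
  obtain ⟨μ, rfl⟩ := Algebra.mem_bot.mp hw
  exact h.unique hi (of_commute (Algebra.commute_algebraMap_right μ u)) (mul_ne_zero hw0 hu)

theorem IsKummerSpace.mul_mem_bot [CharZero F] (hi : i ^ 2 = -1) {V : Submodule F A}
    (hV : IsKummerSpace V) {u w w' : A} (hu : u ∈ V) (hw : w ∈ V) (hw' : w' ∈ V)
    {x y z : ZMod 4} (hx : QCommute i x w u) (hy : QCommute i y w' u) (hz : QCommute i z w' w)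
    (hxyz : 2 * arrangementSum x y z ≠ 0) :
    u * u * w * w' ∈ (⊥ : Subalgebra F A) := by
  have hμ : gaussianLift hi (2 * arrangementSum x y z) ≠ 0 :=
    (map_ne_zero_iff _ (gaussianLift_injective hi)).mpr hxyz
  have h := Subalgebra.smul_mem _ (hV.arrangementSum_smul_mem_bot hi hu hw hw' hx hy hz)
    (gaussianLift hi (2 * arrangementSum x y z))⁻¹
  rwa [smul_smul, inv_mul_cancel₀ hμ, one_smul] at h

theorem exists_eq_smul_of_mul_mem_bot {u w : A} (hu : u ≠ 0)
    (hu4 : u ^ 4 ∈ Set.range (algebraMap F A)) (h : u * u * u * w ∈ (⊥ : Subalgebra F A)) :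
    ∃ μ : F, w = μ • u := by
  obtain ⟨ν, hν⟩ := hu4
  obtain ⟨μ, hμ⟩ := Algebra.mem_bot.mp h
  have hν0 : ν ≠ 0 := by
    rintro rfl
    exact pow_ne_zero 4 hu (by rw [← hν, map_zero])
  refine ⟨ν⁻¹ * μ, ?_⟩
  have key : ν • w = μ • u := by
    rw [Algebra.smul_def, hν, Algebra.smul_def, Algebra.commutes, hμ]
    noncomm_ring
  rw [mul_smul, ← key, smul_smul, inv_mul_cancel₀ hν0, one_smul]

end KummerSpace

/-- `c a b` stands for the exponent in `v a * v b = i ^ c a b • (v b * v a)`. The hypotheses of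
`central` are those under which `2 * arrangementSum` is nonzero, making `v a * v a * v b * v d` a
nonzero scalar, which every `v j` must commute with. -/
structure IsKummerPattern {ι : Type*} (c : ι → ι → ZMod 4) : Prop where
  diag : ∀ a, c a a = 0
  skew : ∀ a b, c b a = -c a b
  ne_zero : ∀ a b, a ≠ b → c a b ≠ 0
  central : ∀ a b d j, c a b ≠ 0 → c a b + c a d = 0 → c d b ≠ c a b →
    2 * c j a + c j b + c j d = 0

theorem isKummerPattern_of_qcommute {ι F A : Type*} [Field F] [CharZero F] [DivisionRing A]
    [Algebra F A] {i : F} (hi : i ^ 2 = -1) {v : ι → A} {c : ι → ι → ZMod 4}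
    (hc : ∀ a b, QCommute i (c a b) (v a) (v b)) (hv : ∀ a, v a ≠ 0)
    (hK : IsKummerSpace (span F (Set.range v)))
    (hprop : ∀ a b (μ : F), v b = μ • v a → b = a) : IsKummerPattern c := by
  have hprim := isPrimitiveRoot_four_of_sq_eq_neg_one hi two_ne_zero
  have h4 := hprim.pow_eq_one
  have hmem : ∀ a, v a ∈ span F (Set.range v) := fun a => subset_span ⟨a, rfl⟩
  have diag : ∀ a, c a a = 0 := fun a =>
    (hc a a).unique hprim (.of_commute (Commute.refl _)) (mul_ne_zero (hv a) (hv a))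
  have skew : ∀ a b, c b a = -c a b := fun a b =>
    (hc b a).unique hprim ((hc a b).symm h4) (mul_ne_zero (hv a) (hv b))
  refine ⟨diag, skew, fun a b hab h0 => ?_, fun a b d j hab habd hdb => ?_⟩
  · have hba : c b a = 0 := by rw [skew, h0, neg_zero]
    obtain ⟨μ, hμ⟩ := exists_eq_smul_of_mul_mem_bot (hv a) (hK _ (hmem a))
      (hK.mul_mem_bot hi (hmem a) (hmem a) (hmem b) (hc a a) (hc b a) (hc b a)
        (by rw [diag, hba]; exact arrangementSum_zero))
    exact hab (hprop a b μ hμ).symm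
  · have hda : c d a = -c b a := by
      rw [skew a d, skew a b, eq_neg_of_add_eq_zero_right habd]
    have hP := hK.mul_mem_bot hi (hmem a) (hmem b) (hmem d) (hc b a) (hc d a) (hc d b) (by
      rw [hda]
      exact arrangementSum_ne_zero _ _ (by rwa [skew, neg_ne_zero]) (by rwa [skew a b, neg_neg]))
    have hj := (((hc j a).mul_right h4 (hc j a)).mul_right h4 (hc j b)).mul_right h4 (hc j d)
    rw [← hj.eq_zero_of_mem_bot hprim hP (hv j)
      (mul_ne_zero (mul_ne_zero (mul_ne_zero (hv a) (hv a)) (hv b)) (hv d))]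
    ring

namespace IsKummerPattern

variable {ι : Type*} {c : ι → ι → ZMod 4} (hc : IsKummerPattern c)
include hc

theorem swap {a b : ι} {x : ZMod 4} (h : c a b = x) : c b a = -x :=
  h ▸ hc.skew a b

theorem false_of_eq {a b d j : ι} {x y z p q r : ZMod 4} (hab : c a b = x) (had : c a d = y)
    (hdb : c d b = z) (hja : c j a = p) (hjb : c j b = q) (hjd : c j d = r)
    (h : x ≠ 0 ∧ x + y = 0 ∧ z ≠ x ∧ 2 * p + q + r ≠ 0 := by decide) : False := by
  subst hab had hdb hja hjb hjd
  exact h.2.2.2 (hc.central a b d j h.1 h.2.1 h.2.2.1)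

theorem eq_one_or_eq_two_or_eq_three {a b : ι} (hab : a ≠ b) :
    c a b = 1 ∨ c a b = 2 ∨ c a b = 3 := by
  have h := hc.ne_zero a b hab
  generalize c a b = t at h ⊢
  revert t
  decide

theorem two_path {a b d : ι} (hab : c a b = 1) (hbd : c b d = 1) : c a d = 1 ∨ c a d = 2 := by
  have had : a ≠ d := by
    rintro rfl
    exact absurd (hc.swap hab) (by rw [hbd]; decide)
  rcases hc.eq_one_or_eq_two_or_eq_three had with h | h | h
  · exact .inl h
  · exact .inr h
  · exact (hc.false_of_eq hab h (hc.swap hbd) (hc.swap hab) (hc.diag b) hbd).elim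

theorem three_path {a b d e : ι} (hab : c a b = 1) (hbd : c b d = 1) (hde : c d e = 1) :
    c a e = 1 ∨ c a d = 2 ∧ c b e = 2 ∧ c e a = 1 := by
  have hae : a ≠ e := by
    rintro rfl
    rcases hc.two_path hab hbd with h | h <;> exact absurd (hc.swap hde) (by rw [h]; decide)
  rcases hc.two_path hab hbd with had | had <;> rcases hc.two_path hbd hde with hbe | hbe
  · rcases hc.two_path had hde with h | h
    · exact .inl h
    · exact (hc.false_of_eq (hc.swap hab) hbe (hc.swap h) (hc.swap hbd) (hc.swap had) hde).elim
  · rcases hc.two_path had hde with h | h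
    · exact .inl h
    · exact (hc.false_of_eq h h (hc.diag e) (hc.swap hab) hbe hbe).elim
  · rcases hc.eq_one_or_eq_two_or_eq_three hae with h | h | h
    · exact .inl h
    · exact (hc.false_of_eq had had (hc.diag d) (hc.swap h) (hc.swap hde) (hc.swap hde)).elim
    · rcases hc.two_path hab hbe with h' | h' <;> exact absurd h (by rw [h']; decide)
  · rcases hc.eq_one_or_eq_two_or_eq_three hae with h | h | h
    · exact .inl h
    · exact (hc.false_of_eq had had (hc.diag d) (hc.swap h) (hc.swap hde) (hc.swap hde)).elim
    · exact .inr ⟨had, hbe, by rw [hc.swap h]; decide⟩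

theorem four_path {a b d e f : ι} (hab : c a b = 1) (hbd : c b d = 1) (hde : c d e = 1)
    (hef : c e f = 1) (haf : a ≠ f) : c a f = 1 := by
  rcases hc.three_path hbd hde hef with hbf | ⟨hbe, hdf, hfb⟩
  · rcases hc.two_path hab hbf with h | h
    · exact h
    · exfalso
      rcases hc.two_path hab hbd with had | had <;> rcases hc.two_path hde hef with hdf | hdf <;>
        exact hc.false_of_eq (hc.swap hab) hbf (hc.swap h) (hc.swap hbd) (hc.swap had) hdf
  · rcases hc.eq_one_or_eq_two_or_eq_three haf with h | h | h
    · exact h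
    · exfalso
      rcases hc.three_path hab hbd hde with hae | ⟨had, -, -⟩
      · exact hc.false_of_eq (hc.swap hae) hef (hc.swap h) hbe (hc.swap hab) (hc.swap hfb)
      · exact hc.false_of_eq (hc.swap hab) hbd (hc.swap had) hfb (hc.swap h) (hc.swap hdf)
    · exfalso
      rcases hc.three_path hab hbd hde with hae | ⟨-, -, hea⟩
      · rcases hc.two_path hae hef with h' | h' <;> exact absurd h (by rw [h']; decide)
      · exact hc.false_of_eq hab (hc.swap hea) (hc.swap hbe) (hc.swap h) hfb (hc.swap hef)

theorem path_shortcut {k : ℕ} (hk : 4 ≤ k) {w : ℕ → ι} (hw : Set.InjOn w (Set.Iic k))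
    (hpath : ∀ a < k, c (w a) (w (a + 1)) = 1) : c (w 0) (w k) = 1 := by
  induction k using Nat.strong_induction_on generalizing w with
  | _ k ih =>
  obtain rfl | hk5 := eq_or_lt_of_le hk
  · refine hc.four_path (hpath 0 (by omega)) (hpath 1 (by omega)) (hpath 2 (by omega))
      (hpath 3 (by omega)) fun h => ?_
    have := hw (Set.mem_Iic.mpr (by omega)) (Set.mem_Iic.mpr le_rfl) h
    omega
  have hinit : c (w 0) (w (k - 1)) = 1 :=
    ih (k - 1) (by omega) (by omega) (hw.mono (Set.Iic_subset_Iic.mpr (by omega)))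
      fun a ha => hpath a (by omega)
  have htail : ∀ l, 4 ≤ l → l < k → c (w 1) (w (l + 1)) = 1 := fun l hl hlk => by
    refine ih l hlk hl (w := fun a => w (a + 1)) (fun a ha b hb h => ?_)
      fun a ha => hpath (a + 1) (by omega)
    rw [Set.mem_Iic] at ha hb
    have := hw (Set.mem_Iic.mpr (by omega : a + 1 ≤ k))
      (Set.mem_Iic.mpr (by omega : b + 1 ≤ k)) h
    omega
  have hodd : c (w 1) (w (k - 1)) = 1 ∨ c (w (k - 1)) (w 1) = 1 := by
    rcases (by omega : k = 5 ∨ 6 ≤ k) with rfl | hk6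
    · exact (hc.three_path (hpath 1 (by omega)) (hpath 2 (by omega)) (hpath 3 (by omega))).imp
        id (·.2.2)
    · refine .inl ?_
      simpa [show k - 2 + 1 = k - 1 by omega] using htail (k - 2) (by omega) (by omega)
  have hk1 : c (w (k - 1)) (w k) = 1 := by
    simpa [show k - 1 + 1 = k by omega] using hpath (k - 1) (by omega)
  rcases hc.two_path hinit hk1 with h | h
  · exact h
  -- `c (w 0) (w k) = 2` makes `central` apply to `w 1, w 0, w k`, and `w (k - 1)` violates it
  -- because `c (w 1) (w (k - 1))` is odd.
  have hlast : c (w 1) (w k) = 1 := by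
    simpa [show k - 1 + 1 = k by omega] using htail (k - 1) (by omega) (by omega)
  have h01 : c (w 0) (w 1) = 1 := hpath 0 (by omega)
  rcases hodd with hodd | hodd
  · exact (hc.false_of_eq (hc.swap h01) hlast (hc.swap h) (hc.swap hodd) (hc.swap hinit) hk1).elim
  · exact (hc.false_of_eq (hc.swap h01) hlast (hc.swap h) hodd (hc.swap hinit) hk1).elim

end IsKummerPattern

open Fin.NatCast in
theorem IsKummerPattern.eq_four_of_cycle {m : ℕ} {c : Fin (m + 2) → Fin (m + 2) → ZMod 4}
    (hc : IsKummerPattern c) (hcyc : ∀ k, c k (k + 1) = 1) : m + 2 = 4 := by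
  have hclose : c (Fin.last (m + 1)) 0 = 1 := by simpa using hcyc (Fin.last (m + 1))
  have hopen := hc.swap hclose
  rcases (by omega : m = 0 ∨ m = 1 ∨ m = 2 ∨ 3 ≤ m) with rfl | rfl | rfl | hm
  · have h := hcyc 0
    rw [show (0 : Fin 2) + 1 = Fin.last 1 by decide, hopen] at h
    exact absurd h (by decide)
  · rw [show Fin.last 2 = (1 : Fin 3) + 1 by decide] at hopen
    rcases hc.two_path (hcyc 0) (hcyc 1) with h | h <;> exact absurd hopen (by rw [h]; decide)
  · rfl
  · have hpath := hc.path_shortcut (k := m + 1) (w := fun a => (a : Fin (m + 2))) (by omega)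
      (fun a ha b hb h => by
        simpa [Fin.val_cast_of_lt (Nat.lt_succ_of_le (Set.mem_Iic.mp ha)),
          Fin.val_cast_of_lt (Nat.lt_succ_of_le (Set.mem_Iic.mp hb))] using congrArg Fin.val h)
      (fun a _ => by simpa using hcyc a)
    rw [Nat.cast_zero, Fin.natCast_eq_last, hopen] at hpath
    exact absurd hpath (by decide)

namespace TensorCyclicPres

variable {F A : Type*} [Field F] [DivisionRing A] [Algebra F A] {i : F} {n : ℕ}
  (P : TensorCyclicPres F A i n)

def monomial (a b : Fin n → Fin 4) : A :=
  ((List.finRange n).map fun k => P.x k ^ (a k : ℕ) * P.y k ^ (b k : ℕ)).prod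

theorem isMonomial_iff {v : A} : P.IsMonomial v ↔ ∃ a b, v = P.monomial a b :=
  Iff.rfl

theorem x_ne_zero (k : Fin n) : P.x k ≠ 0 := fun h =>
  P.α_ne_zero k <| (algebraMap F A).injective <| by
    rw [← P.x_pow k, h, map_zero, zero_pow four_ne_zero]

theorem y_ne_zero (k : Fin n) : P.y k ≠ 0 := fun h =>
  P.β_ne_zero k <| (algebraMap F A).injective <| by
    rw [← P.y_pow k, h, map_zero, zero_pow four_ne_zero]

theorem monomial_ne_zero (a b : Fin n → Fin 4) : P.monomial a b ≠ 0 := by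
  refine List.prod_ne_zero fun h => ?_
  obtain ⟨k, -, hk⟩ := List.mem_map.mp h
  exact mul_ne_zero (pow_ne_zero _ (P.x_ne_zero k)) (pow_ne_zero _ (P.y_ne_zero k)) hk

theorem qcommute_x_y (k : Fin n) : QCommute i 1 (P.x k) (P.y k) := by
  simpa [QCommute, show (1 : ZMod 4).val = 1 from rfl] using P.xy_rel k

theorem qcommute_x_monomial (hi : i ^ 4 = 1) (a b : Fin n → Fin 4) (t : Fin n) :
    QCommute i (b t : ℕ) (P.x t) (P.monomial a b) := by
  have h := QCommute.list_prod_right hi (u := P.x t) (List.finRange n)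
    (f := fun k => P.x k ^ (a k : ℕ) * P.y k ^ (b k : ℕ))
    (g := fun k => if k = t then ((b t : ℕ) : ZMod 4) else 0) fun s _ => by
      by_cases hst : s = t
      · subst hst
        simpa using (QCommute.of_commute ((Commute.refl _).pow_right _)).mul_right hi
          ((P.qcommute_x_y s).pow_right hi (b s))
      · simpa [hst] using QCommute.of_commute
          (((P.xx_comm t s (Ne.symm hst)).pow_right _).mul_right
            ((P.xy_comm t s (Ne.symm hst)).pow_right _))
  simpa [monomial, ← Fin.sum_univ_def] using h

theorem qcommute_y_monomial (hi : i ^ 4 = 1) (a b : Fin n → Fin 4) (t : Fin n) :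
    QCommute i (-(a t : ℕ)) (P.y t) (P.monomial a b) := by
  have h := QCommute.list_prod_right hi (u := P.y t) (List.finRange n)
    (f := fun k => P.x k ^ (a k : ℕ) * P.y k ^ (b k : ℕ))
    (g := fun k => if k = t then -((a t : ℕ) : ZMod 4) else 0) fun s _ => by
      by_cases hst : s = t
      · subst hst
        simpa using (((P.qcommute_x_y s).symm hi).pow_right hi (a s)).mul_right hi
          (QCommute.of_commute ((Commute.refl _).pow_right _))
      · simpa [hst] using QCommute.of_commute
          (((P.xy_comm s t hst).symm.pow_right _).mul_right
            ((P.yy_comm t s (Ne.symm hst)).pow_right _))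
  simpa [monomial, ← Fin.sum_univ_def] using h

theorem exists_qcommute_monomial (hi : i ^ 4 = 1) (a b a' b' : Fin n → Fin 4) :
    ∃ γ, QCommute i γ (P.monomial a b) (P.monomial a' b') :=
  ⟨_, QCommute.list_prod_left hi (List.finRange n) fun s _ =>
    ((P.qcommute_x_monomial hi a' b' s).pow_left hi (a s)).mul_left hi
      ((P.qcommute_y_monomial hi a' b' s).pow_left hi (b s))⟩

theorem monomial_eq_of_eq_smul (hi : IsPrimitiveRoot i 4) {a b a' b' : Fin n → Fin 4} {μ : F}
    (h : P.monomial a' b' = μ • P.monomial a b) : P.monomial a' b' = P.monomial a b := by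
  have hcast : Function.Injective fun k : Fin 4 => ((k : ℕ) : ZMod 4) := by decide
  have hx : ∀ t, b' t = b t := fun t => hcast <|
    (P.qcommute_x_monomial hi.pow_eq_one a' b' t).unique hi
      (h ▸ (P.qcommute_x_monomial hi.pow_eq_one a b t).smul_right μ)
      (mul_ne_zero (P.monomial_ne_zero a' b') (P.x_ne_zero t))
  have hy : ∀ t, a' t = a t := fun t => hcast <| neg_injective <|
    (P.qcommute_y_monomial hi.pow_eq_one a' b' t).unique hi
      (h ▸ (P.qcommute_y_monomial hi.pow_eq_one a b t).smul_right μ)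
      (mul_ne_zero (P.monomial_ne_zero a' b') (P.y_ne_zero t))
  rw [funext hx, funext hy]

end TensorCyclicPres

theorem statement10_general {F A : Type*} [Field F] [CharZero F] [DivisionRing A] [Algebra F A]
    (i : F) (hi : i ^ 2 = -1) (n : ℕ)
    (P : TensorCyclicPres F A i n)
    (m : ℕ) (hr : m + 2 ≠ 4) (v : Fin (m + 2) → A)
    (hmon : ∀ k, P.IsMonomial (v k)) (hinj : Function.Injective v)
    (hK : ∀ u ∈ Submodule.span F (Set.range v), u ^ 4 ∈ Set.range (algebraMap F A)) :
    ¬ ∀ k : Fin (m + 2), v k * v (k + 1) = i • (v (k + 1) * v k) := by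
  intro hcyc
  have hprim := isPrimitiveRoot_four_of_sq_eq_neg_one hi two_ne_zero
  choose a b hab using fun k => P.isMonomial_iff.mp (hmon k)
  have hv : ∀ k, v k ≠ 0 := fun k => hab k ▸ P.monomial_ne_zero _ _
  have hq : ∀ k l, ∃ γ, QCommute i γ (v k) (v l) := fun k l => by
    rw [hab k, hab l]
    exact P.exists_qcommute_monomial hprim.pow_eq_one (a k) (b k) (a l) (b l)
  choose c hc using hq
  have hpat : IsKummerPattern c := isKummerPattern_of_qcommute hi hc hv hK fun k l μ h =>
    hinj (by rw [hab l, hab k] at h ⊢; exact P.monomial_eq_of_eq_smul hprim h)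
  refine hr (hpat.eq_four_of_cycle fun k =>
    (hc k (k + 1)).unique hprim ?_ (mul_ne_zero (hv _) (hv _)))
  simpa [QCommute, show (1 : ZMod 4).val = 1 from rfl] using hcyc k

/-- There are no directed cycles of length other than 4 among distinct monomials
spanning a Kummer space: for `r ≥ 2`, `r ≠ 4` (written `r = m + 2` below), distinct
monomials `v₀, …, v_{r-1}` cannot satisfy `vₖ v_{k+1} = i · v_{k+1} vₖ` cyclically. -/
theorem statement10 {F A : Type*} [Field F] [CharZero F] [DivisionRing A] [Algebra F A]
    (i : F) (hi : i ^ 2 = -1) (n : ℕ) (hn : 1 ≤ n)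
    (P : TensorCyclicPres F A i n) (hdim : Module.finrank F A = 16 ^ n)
    (m : ℕ) (hr : m + 2 ≠ 4) (v : Fin (m + 2) → A)
    (hmon : ∀ k, P.IsMonomial (v k)) (hinj : Function.Injective v)
    (hK : ∀ u ∈ Submodule.span F (Set.range v), u ^ 4 ∈ Set.range (algebraMap F A)) :
    ¬ ∀ k : Fin (m + 2), v k * v (k + 1) = i • (v (k + 1) * v k) :=
  statement10_general i hi n P m hr v hmon hinj hK
end
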